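/- arXiv:0902.1797 — 6 statements merged into one kernel-verified Lean document; each statement's English description precedes it below -/
import Mathlib

section
/- The operator T satisfies the two defining properties of the quantum Weyl group reflection element: (i) if λ ≥ 0 and v ∈ V_λ satisfies E v = 0, then T v = F^{(λ)} v; and (ii) for every λ ≥ 0 and every v ∈ V_{λ+2}, one has T(F v) = −q^{λ+2} · E(T v). -/
/-!
For `v ∈ V_{λ+2}` put `X_s = F^{(λ+1+s)} E^{(s)} v`. Moving `F` past `E^{(s)}` in `T (F v)`,
and `E` past `F^{(λ+2+s)}` in `E (T v)`, with the divided-power commutation formulas writes both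
sides as combinations of the pairs `X_s + X_{s+1}`. Summation by parts turns them into
`-q^{λ+2} Σ (-1)^s q^{2s} X_s` and `Σ (-1)^s q^{2s} X_s`: each new coefficient collapses by
`q [n+1] = [n] + q^{n+1}`. The commutation formulas rest on `[a+1][b+1] = [a][b] + [a+b+1]`,
which follows from the recursion `[m+1] + [m-1] = [2][m]` by induction on `a`. Part (i) is
immediate, since every term with `s > 0` contains `E v = 0`.
-/

noncomputable section

/-- The quantum integer `[n]_q = q^{n-1} + q^{n-3} + ⋯ + q^{-(n-1)}` for `n : ℕ`. -/
def qintN {𝕜 : Type*} [Field 𝕜] (q : 𝕜) (n : ℕ) : 𝕜 :=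
  ∑ j ∈ Finset.range n, q ^ ((n : ℤ) - 1 - 2 * (j : ℤ))

/-- The quantum integer `[m]_q` for `m : ℤ`, with `[-m]_q = -[m]_q`. -/
def qintZ {𝕜 : Type*} [Field 𝕜] (q : 𝕜) (m : ℤ) : 𝕜 :=
  if 0 ≤ m then qintN q m.toNat else - qintN q (-m).toNat

/-- The quantum factorial `[n]_q! = [1]_q [2]_q ⋯ [n]_q`. -/
def qfact {𝕜 : Type*} [Field 𝕜] (q : 𝕜) (n : ℕ) : 𝕜 :=
  ∏ i ∈ Finset.range n, qintN q (i + 1)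

open Finset

section QuantumIntegers

variable {𝕜 : Type*} [Field 𝕜] (q : 𝕜)

@[simp] lemma qintN_zero : qintN q 0 = 0 := by simp [qintN]

@[simp] lemma qintN_one : qintN q 1 = 1 := by simp [qintN]

@[simp] lemma qintZ_natCast (n : ℕ) : qintZ q n = qintN q n := by simp [qintZ]

@[simp] lemma qintZ_zero : qintZ q 0 = 0 := by simpa using qintZ_natCast q 0

@[simp] lemma qintZ_one : qintZ q 1 = 1 := by simpa using qintZ_natCast q 1

lemma qintZ_neg (m : ℤ) : qintZ q (-m) = -qintZ q m := by
  rcases lt_trichotomy m 0 with h | rfl | h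
  · simp [qintZ, h.not_ge, h.le]
  · simp
  · simp [qintZ, h.not_ge, h.le]

lemma qfact_succ (n : ℕ) : qfact q (n + 1) = qfact q n * qintN q (n + 1) :=
  prod_range_succ _ n

variable {q}

lemma mul_qintN_succ (hq : q ≠ 0) (n : ℕ) : q * qintN q (n + 1) = qintN q n + q ^ (n + 1) := by
  have hmul (k : ℤ) : q * q ^ k = q ^ (k + 1) := by rw [zpow_add_one₀ hq, mul_comm]
  simp only [qintN, mul_sum, hmul]
  rw [sum_range_succ']
  congr 1
  · refine sum_congr rfl fun j _ => ?_
    congr 1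
    push_cast
    ring
  · rw [← zpow_natCast]
    congr 1
    push_cast
    ring

lemma qintN_add_two_add (hq : q ≠ 0) (n : ℕ) :
    qintN q (n + 2) + qintN q n = qintN q 2 * qintN q (n + 1) := by
  refine mul_left_cancel₀ hq ?_
  have h₀ := mul_qintN_succ hq n
  have h₁ := mul_qintN_succ hq (n + 1)
  have h₂ := mul_qintN_succ hq 1
  rw [qintN_one] at h₂
  linear_combination h₁ - q * h₀ - qintN q (n + 1) * h₂

lemma qintZ_add_one_add_sub_one (hq : q ≠ 0) (m : ℤ) :
    qintZ q (m + 1) + qintZ q (m - 1) = qintZ q 2 * qintZ q m := by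
  have hnat (n : ℕ) : qintZ q (n + 1) + qintZ q (n - 1) = qintZ q 2 * qintZ q n := by
    rcases n with _ | n
    · simp [qintZ_neg]
    · have := qintN_add_two_add hq n
      push_cast
      simp only [add_sub_cancel_right, add_assoc, one_add_one_eq_two]
      exact_mod_cast this
  obtain ⟨n, rfl | rfl⟩ := Int.eq_nat_or_neg m
  · exact hnat n
  · rw [show -(n : ℤ) + 1 = -((n : ℤ) - 1) by ring,
      show -(n : ℤ) - 1 = -((n : ℤ) + 1) by ring, qintZ_neg, qintZ_neg, qintZ_neg]
    linear_combination -hnat n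

lemma qintZ_add_one_mul_add_one (hq : q ≠ 0) (a b : ℤ) :
    qintZ q (a + 1) * qintZ q (b + 1) = qintZ q a * qintZ q b + qintZ q (a + b + 1) := by
  induction a using Int.induction_on generalizing b with
  | zero => simp
  | succ a ih =>
    have ha := qintZ_add_one_add_sub_one hq (a + 1)
    have hb := qintZ_add_one_add_sub_one hq (b + 1)
    have := ih (b + 1)
    simp only [add_sub_cancel_right] at ha hb
    rw [show (a : ℤ) + 1 + b + 1 = a + (b + 1) + 1 by ring]
    linear_combination this + qintZ q (b + 1) * ha - qintZ q (a + 1) * hb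
  | pred a ih =>
    have ha := qintZ_add_one_add_sub_one hq (-a)
    have hb := qintZ_add_one_add_sub_one hq b
    have := ih (b - 1)
    rw [sub_add_cancel, show -(a : ℤ) + (b - 1) + 1 = -a - 1 + b + 1 by ring] at this
    rw [sub_add_cancel]
    linear_combination this - qintZ q b * ha + qintZ q (-a) * hb

end QuantumIntegers

section DividedPowers

variable {𝕜 V : Type*} [Field 𝕜] [AddCommGroup V] [Module 𝕜 V] {q : 𝕜}

variable (q) in
def dividedPow (A : Module.End 𝕜 V) (n : ℕ) : Module.End 𝕜 V := (qfact q n)⁻¹ • A ^ n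

@[simp] lemma dividedPow_zero (A : Module.End 𝕜 V) : dividedPow q A 0 = 1 := by
  simp [dividedPow, qfact]

lemma qintN_smul_dividedPow_succ {n : ℕ} (h : qintN q (n + 1) ≠ 0) (A : Module.End 𝕜 V) :
    qintN q (n + 1) • dividedPow q A (n + 1) = (qfact q n)⁻¹ • A ^ (n + 1) := by
  rw [dividedPow, qfact_succ, smul_smul, mul_inv, mul_left_comm, mul_inv_cancel₀ h, mul_one]

lemma mul_dividedPow {n : ℕ} (h : qintN q (n + 1) ≠ 0) (A : Module.End 𝕜 V) :
    A * dividedPow q A n = qintN q (n + 1) • dividedPow q A (n + 1) := by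
  rw [qintN_smul_dividedPow_succ h, dividedPow, mul_smul_comm, pow_succ']

lemma dividedPow_mul {n : ℕ} (h : qintN q (n + 1) ≠ 0) (A : Module.End 𝕜 V) :
    dividedPow q A n * A = qintN q (n + 1) • dividedPow q A (n + 1) := by
  rw [qintN_smul_dividedPow_succ h, dividedPow, smul_mul_assoc, pow_succ]

lemma dividedPow_apply_eq_zero {A : Module.End 𝕜 V} {v : V} {N s : ℕ} (hv : (A ^ N) v = 0)
    (hs : N ≤ s) : dividedPow q A s v = 0 := by
  obtain ⟨k, rfl⟩ := Nat.exists_eq_add_of_le' hs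
  simp [dividedPow, pow_add, hv]

variable (q) in
def reflectionSum (E F : Module.End 𝕜 V) (N lam : ℕ) (v : V) : V :=
  ∑ s ∈ range (N + 1),
    ((-1 : 𝕜) ^ s * q ^ s) • dividedPow q F (lam + s) (dividedPow q E s v)

lemma reflectionSum_of_apply_eq_zero {E F : Module.End 𝕜 V} {N lam : ℕ} {v : V}
    (hv : E v = 0) :
    reflectionSum q E F N lam v = dividedPow q F lam v := by
  simp [reflectionSum, sum_range_succ', dividedPow, pow_succ, hv, qfact]

end DividedPowers

lemma sum_range_smul_add_succ {R M : Type*} [Semiring R] [AddCommMonoid M] [Module R M]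
    (a : ℕ → R) (X : ℕ → M) {n : ℕ} (hX : X (n + 1) = 0) :
    ∑ s ∈ range (n + 1), a s • (X s + X (s + 1)) =
      a 0 • X 0 + ∑ s ∈ range n, (a s + a (s + 1)) • X (s + 1) := by
  simp only [smul_add, add_smul, sum_add_distrib]
  rw [sum_range_succ' (fun s => a s • X s), sum_range_succ (fun s => a s • X (s + 1)), hX,
    smul_zero, add_zero]
  abel

section WeightModule

variable {𝕜 V : Type*} [Field 𝕜] [AddCommGroup V] [Module 𝕜 V] {q : 𝕜}
  {Vw : ℤ → Submodule 𝕜 V} {E F : Module.End 𝕜 V}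
  (hq : q ≠ 0) (hqint : ∀ n : ℕ, 1 ≤ n → qintN q n ≠ 0)
  (hE : ∀ μ : ℤ, ∀ v ∈ Vw μ, E v ∈ Vw (μ + 2))
  (hF : ∀ μ : ℤ, ∀ v ∈ Vw μ, F v ∈ Vw (μ - 2))
  (hEF : ∀ μ : ℤ, ∀ v ∈ Vw μ, E (F v) - F (E v) = qintZ q μ • v)

include hE in
lemma pow_apply_mem {μ : ℤ} {v : V} (hv : v ∈ Vw μ) (s : ℕ) :
    (E ^ s) v ∈ Vw (μ + 2 * s) := by
  induction s with
  | zero => simpa using hv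
  | succ s ih =>
    rw [pow_succ', Module.End.mul_apply]
    convert hE _ _ ih using 2
    push_cast
    ring

include hE in
lemma dividedPow_apply_mem {μ : ℤ} {v : V} (hv : v ∈ Vw μ) (s : ℕ) :
    dividedPow q E s v ∈ Vw (μ + 2 * s) :=
  Submodule.smul_mem _ _ (pow_apply_mem hE hv s)

include hq hE hEF in
lemma pow_succ_apply_comm {μ : ℤ} {w : V} (hw : w ∈ Vw μ) (s : ℕ) :
    (E ^ (s + 1)) (F w) =
      F ((E ^ (s + 1)) w) + (qintN q (s + 1) * qintZ q (μ + s)) • (E ^ s) w := by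
  induction s with
  | zero =>
    simp only [zero_add, pow_one, qintN_one, one_mul, Nat.cast_zero, add_zero, pow_zero,
      Module.End.one_apply]
    rw [← hEF μ w hw, add_sub_cancel]
  | succ s ih =>
    have hcomm := eq_add_of_sub_eq' (hEF _ _ (pow_apply_mem hE hw (s + 1)))
    have hcoeff : qintN q (s + 1 + 1) * qintZ q (μ + ↑(s + 1)) =
        qintN q (s + 1) * qintZ q (μ + s) + qintZ q (μ + 2 * ↑(s + 1)) := by
      have := qintZ_add_one_mul_add_one hq (s + 1) (μ + s)
      simp only [← qintZ_natCast]
      push_cast at this ⊢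
      convert this using 2 <;> ring_nf
    rw [pow_succ' E (s + 1), Module.End.mul_apply, ih, map_add, map_smul, hcomm,
      ← Module.End.mul_apply E, ← pow_succ', ← Module.End.mul_apply E, ← pow_succ', hcoeff]
    module

include hq hF hEF in
lemma apply_pow_succ_comm {μ : ℤ} {w : V} (hw : w ∈ Vw μ) (n : ℕ) :
    E ((F ^ (n + 1)) w) =
      (F ^ (n + 1)) (E w) + (qintN q (n + 1) * qintZ q (μ - n)) • (F ^ n) w := by
  induction n generalizing μ w with
  | zero =>
    simp only [zero_add, pow_one, qintN_one, one_mul, Nat.cast_zero, sub_zero, pow_zero,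
      Module.End.one_apply]
    rw [← hEF μ w hw, add_sub_cancel]
  | succ n ih =>
    have hcoeff : qintN q (n + 1 + 1) * qintZ q (μ - ↑(n + 1)) =
        qintN q (n + 1) * qintZ q (μ - 2 - n) + qintZ q μ := by
      have := qintZ_add_one_mul_add_one hq (n + 1) (μ - n - 2)
      simp only [← qintZ_natCast]
      push_cast at this ⊢
      convert this using 2 <;> ring_nf
    rw [pow_succ F (n + 1), Module.End.mul_apply, ih (hF μ w hw), Module.End.mul_apply,
      eq_add_of_sub_eq' (hEF μ w hw), map_add, map_smul, ← Module.End.mul_apply (F ^ (n + 1)),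
      ← pow_succ, ← Module.End.mul_apply (F ^ n), ← pow_succ, hcoeff]
    module

include hq hqint hE hEF in
lemma dividedPow_succ_apply_comm {μ : ℤ} {w : V} (hw : w ∈ Vw μ) (s : ℕ) :
    dividedPow q E (s + 1) (F w) =
      F (dividedPow q E (s + 1) w) + qintZ q (μ + s) • dividedPow q E s w := by
  have h := hqint (s + 1) le_add_self
  simp only [dividedPow, LinearMap.smul_apply, pow_succ_apply_comm hq hE hEF hw, map_smul, smul_add,
    smul_smul, qfact_succ, mul_inv]
  congr 2
  field_simp

include hq hqint hF hEF in
lemma apply_dividedPow_succ_comm {μ : ℤ} {w : V} (hw : w ∈ Vw μ) (n : ℕ) :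
    E (dividedPow q F (n + 1) w) =
      dividedPow q F (n + 1) (E w) + qintZ q (μ - n) • dividedPow q F n w := by
  have h := hqint (n + 1) le_add_self
  simp only [dividedPow, LinearMap.smul_apply, map_smul, apply_pow_succ_comm hq hF hEF hw, smul_add,
    smul_smul, qfact_succ, mul_inv]
  congr 2
  field_simp

include hq hqint hE hEF in
lemma reflectionSum_apply_F {N lam : ℕ} {v : V} (hv : v ∈ Vw (lam + 2)) (hEN : (E ^ N) v = 0) :
    reflectionSum q E F N lam (F v) = -q ^ (lam + 2) •
      ∑ s ∈ range (N + 1), ((-1 : 𝕜) ^ s * q ^ (2 * s)) •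
        dividedPow q F (lam + 1 + s) (dividedPow q E s v) := by
  set X : ℕ → V := fun s => dividedPow q F (lam + 1 + s) (dividedPow q E s v) with hX
  have hX_zero {s : ℕ} (hs : N ≤ s) : X s = 0 := by
    simp [hX, dividedPow_apply_eq_zero hEN hs]
  have hterm_zero :
      dividedPow q F (lam + 0) (dividedPow q E 0 (F v)) = qintN q (lam + 1) • X 0 := by
    rw [dividedPow_zero, Module.End.one_apply, ← Module.End.mul_apply,
      dividedPow_mul (hqint _ le_add_self)]
    simp [hX]
  have hterm_succ (s : ℕ) : dividedPow q F (lam + (s + 1)) (dividedPow q E (s + 1) (F v)) =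
      qintN q (lam + s + 2) • (X s + X (s + 1)) := by
    have hcoeff : qintZ q (lam + 2 + s) = qintN q (lam + s + 2) := by
      rw [← qintZ_natCast]; push_cast; ring_nf
    rw [dividedPow_succ_apply_comm hq hqint hE hEF hv, map_add, map_smul, ← Module.End.mul_apply,
      dividedPow_mul (hqint _ le_add_self), LinearMap.smul_apply, hcoeff, smul_add, add_comm]
    simp only [hX, show lam + 1 + s = lam + (s + 1) by omega,
      show lam + 1 + (s + 1) = lam + (s + 1) + 1 by omega,
      show lam + (s + 1) + 1 = lam + s + 2 from rfl]
  let b : ℕ → 𝕜 := fun s => (-1) ^ (s + 1) * q ^ (s + 1) * qintN q (lam + s + 2)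
  calc reflectionSum q E F N lam (F v)
      = ∑ s ∈ range N, b s • (X s + X (s + 1)) + qintN q (lam + 1) • X 0 := by
        simp only [reflectionSum, sum_range_succ' _ N, hterm_succ, hterm_zero, smul_smul, b]
        simp
    _ = ∑ s ∈ range (N + 1), b s • (X s + X (s + 1)) + qintN q (lam + 1) • X 0 := by
        rw [sum_range_succ _ N, hX_zero le_rfl, hX_zero N.le_succ, add_zero, smul_zero, add_zero]
    _ = (b 0 + qintN q (lam + 1)) • X 0 + ∑ s ∈ range N, (b s + b (s + 1)) • X (s + 1) := by
        rw [sum_range_smul_add_succ _ _ (hX_zero N.le_succ), add_smul]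
        abel
    _ = _ := by
        rw [sum_range_succ', smul_add, smul_sum, add_comm]
        congr 1
        · refine sum_congr rfl fun s _ => ?_
          rw [smul_smul]
          congr 1
          linear_combination (-(-1) ^ (s + 1) * q ^ (s + 1)) * mul_qintN_succ hq (lam + s + 2)
        · rw [smul_smul]
          congr 1
          linear_combination -mul_qintN_succ hq (lam + 1)

include hq hqint hE hF hEF in
lemma apply_reflectionSum_add_two {N lam : ℕ} {v : V} (hv : v ∈ Vw (lam + 2))
    (hEN : (E ^ N) v = 0) :
    E (reflectionSum q E F N (lam + 2) v) =
      ∑ s ∈ range (N + 1), ((-1 : 𝕜) ^ s * q ^ (2 * s)) •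
        dividedPow q F (lam + 1 + s) (dividedPow q E s v) := by
  set X : ℕ → V := fun s => dividedPow q F (lam + 1 + s) (dividedPow q E s v) with hX
  have hterm (s : ℕ) : E (dividedPow q F (lam + 2 + s) (dividedPow q E s v)) =
      qintN q (s + 1) • (X s + X (s + 1)) := by
    have hcoeff : qintZ q (lam + 2 + 2 * s - (lam + 1 + s : ℕ)) = qintN q (s + 1) := by
      rw [← qintZ_natCast]; push_cast; ring_nf
    rw [show lam + 2 + s = lam + 1 + s + 1 by omega,
      apply_dividedPow_succ_comm hq hqint hF hEF (dividedPow_apply_mem hE hv s), hcoeff,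
      ← Module.End.mul_apply E, mul_dividedPow (hqint _ le_add_self), LinearMap.smul_apply,
      map_smul, smul_add, add_comm]
    simp only [hX, show lam + 1 + (s + 1) = lam + 1 + s + 1 by omega]
  have hX_succ : X (N + 1) = 0 := by
    simp [hX, dividedPow_apply_eq_zero hEN N.le_succ]
  let a : ℕ → 𝕜 := fun s => (-1) ^ s * q ^ s * qintN q (s + 1)
  calc E (reflectionSum q E F N (lam + 2) v)
      = ∑ s ∈ range (N + 1), a s • (X s + X (s + 1)) := by
        simp only [reflectionSum, map_sum, map_smul, hterm, smul_smul, a]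
    _ = a 0 • X 0 + ∑ s ∈ range N, (a s + a (s + 1)) • X (s + 1) :=
        sum_range_smul_add_succ _ _ hX_succ
    _ = _ := by
        rw [sum_range_succ', add_comm]
        congr 1
        · refine sum_congr rfl fun s _ => ?_
          congr 1
          linear_combination (-(-1) ^ s * q ^ s) * mul_qintN_succ hq (s + 1)
        · simp [a, hX]

end WeightModule

theorem reflection_element_properties_general
    {𝕜 V : Type*} [Field 𝕜] [AddCommGroup V] [Module 𝕜 V]
    (q : 𝕜) (hq : q ≠ 0) (hqint : ∀ n : ℕ, 1 ≤ n → qintN q n ≠ 0)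
    -- weight decomposition
    (Vw : ℤ → Submodule 𝕜 V)
    (N : ℕ) (hN : ∀ μ : ℤ, (N : ℤ) < |μ| → Vw μ = ⊥)
    -- the `sl₂` action
    (E F : Module.End 𝕜 V)
    (hE : ∀ μ : ℤ, ∀ v ∈ Vw μ, E v ∈ Vw (μ + 2))
    (hF : ∀ μ : ℤ, ∀ v ∈ Vw μ, F v ∈ Vw (μ - 2))
    (hEF : ∀ μ : ℤ, ∀ v ∈ Vw μ, E (F v) - F (E v) = qintZ q μ • v)
    -- the operator `T`, defined on each nonnegative weight space `V_λ` by
    -- `T v = Σ_s (−1)^s q^s F^{(λ+s)} E^{(s)} v` (the sum is finite: it stops at `s = N`)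
    (T : ℕ → V → V)
    (hT : ∀ (lam : ℕ) (v : V), T lam v =
      ∑ s ∈ Finset.range (N + 1),
        ((-1 : 𝕜) ^ s * q ^ s) •
          ((qfact q (lam + s))⁻¹ • (F ^ (lam + s)) ((qfact q s)⁻¹ • (E ^ s) v))) :
    -- (i) highest weight vectors: `T v = F^{(λ)} v`
    (∀ lam : ℕ, ∀ v ∈ Vw (lam : ℤ), E v = 0 →
        T lam v = (qfact q lam)⁻¹ • (F ^ lam) v) ∧
    -- (ii) `T (F v) = −q^{λ+2} • E (T v)` for `v` of weight `λ + 2`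
    (∀ lam : ℕ, ∀ v ∈ Vw ((lam : ℤ) + 2),
        T lam (F v) = (-(q ^ (lam + 2))) • E (T (lam + 2) v)) := by
  obtain rfl : T = reflectionSum q E F N := funext₂ hT
  refine ⟨fun lam v _ hEv => reflectionSum_of_apply_eq_zero hEv, fun lam v hv => ?_⟩
  have hEN : (E ^ N) v = 0 := by
    have hmem := pow_apply_mem hE hv N
    rwa [hN _ (by rw [abs_of_nonneg (by positivity)]; omega), Submodule.mem_bot] at hmem
  rw [reflectionSum_apply_F hq hqint hE hEF hv hEN,
    apply_reflectionSum_add_two hq hqint hE hF hEF hv hEN]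

theorem reflection_element_properties
    {𝕜 V : Type*} [Field 𝕜] [AddCommGroup V] [Module 𝕜 V]
    (q : 𝕜) (hq : q ≠ 0) (hqint : ∀ n : ℕ, 1 ≤ n → qintN q n ≠ 0)
    -- weight decomposition
    (Vw : ℤ → Submodule 𝕜 V) (hdec : DirectSum.IsInternal Vw)
    (N : ℕ) (hN : ∀ μ : ℤ, (N : ℤ) < |μ| → Vw μ = ⊥)
    -- the `sl₂` action
    (E F : Module.End 𝕜 V)
    (hE : ∀ μ : ℤ, ∀ v ∈ Vw μ, E v ∈ Vw (μ + 2))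
    (hF : ∀ μ : ℤ, ∀ v ∈ Vw μ, F v ∈ Vw (μ - 2))
    (hEF : ∀ μ : ℤ, ∀ v ∈ Vw μ, E (F v) - F (E v) = qintZ q μ • v)
    -- the operator `T`, defined on each nonnegative weight space `V_λ` by
    -- `T v = Σ_s (−1)^s q^s F^{(λ+s)} E^{(s)} v` (the sum is finite: it stops at `s = N`)
    (T : ℕ → V → V)
    (hT : ∀ (lam : ℕ) (v : V), T lam v =
      ∑ s ∈ Finset.range (N + 1),
        ((-1 : 𝕜) ^ s * q ^ s) •
          ((qfact q (lam + s))⁻¹ • (F ^ (lam + s)) ((qfact q s)⁻¹ • (E ^ s) v))) :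
    -- (i) highest weight vectors: `T v = F^{(λ)} v`
    (∀ lam : ℕ, ∀ v ∈ Vw (lam : ℤ), E v = 0 →
        T lam v = (qfact q lam)⁻¹ • (F ^ lam) v) ∧
    -- (ii) `T (F v) = −q^{λ+2} • E (T v)` for `v` of weight `λ + 2`
    (∀ lam : ℕ, ∀ v ∈ Vw ((lam : ℤ) + 2),
        T lam (F v) = (-(q ^ (lam + 2))) • E (T (lam + 2) v)) :=
  reflection_element_properties_general q hq hqint Vw N hN E F hE hF hEF T hT
end
end

section
/- Let (A_•, f_•) be a complex of length n in C. If Hom(A_{i+k+1}⟦k⟧, A_i) = 0 for all i ≥ 0 and k ≥ 1 (whenever i + k + 1 ≤ n), then any two convolutions of (A_•, f_•) are isomorphic. -/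
/-!
Statement 2: If `(A_•, f_•)` is a complex of length `n` in a pretriangulated category `C`
and `Hom(A_{i+k+1}⟦k⟧, A_i) = 0` for all `i ≥ 0`, `k ≥ 1` (with `i + k + 1 ≤ n`), then any
two convolutions of `(A_•, f_•)` are isomorphic.
-/

open CategoryTheory CategoryTheory.Limits CategoryTheory.Pretriangulated

variable {C : Type*} [Category C] [Preadditive C] [HasZeroObject C] [HasShift C ℤ]
  [∀ n : ℤ, (shiftFunctor C n).Additive] [Pretriangulated C]

/-- A Postnikov system for the length-`n` complex
`A n ⟶ A (n-1) ⟶ ⋯ ⟶ A 0` (with differentials `f i : A (i+1) ⟶ A i`):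
objects `B 0 = A 0, B 1, …, B n` together with morphisms
`g i : (B i)⟦-i⟧ ⟶ A i` and (paper indexing) `h (i+1) : A (i+1) ⟶ (B i)⟦-i⟧` such that
each `(B (i+1))⟦-(i+1)⟧ ⟶ A (i+1) ⟶ (B i)⟦-i⟧` extends to a distinguished triangle and
`g i ∘ h (i+1) = f (i+1)`.  The identification `B 0 = A 0` (with `g 0 = id`, `h 0 = id`)
is recorded by requiring `g 0` to be an isomorphism. -/
structure PostnikovSystem (n : ℕ) (A : ℕ → C) (f : ∀ i : ℕ, A (i + 1) ⟶ A i) where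
  B : ℕ → C
  g : ∀ i : ℕ, (B i)⟦(-(i : ℤ))⟧ ⟶ A i
  h : ∀ i : ℕ, A (i + 1) ⟶ (B i)⟦(-(i : ℤ))⟧
  g0_isIso : IsIso (g 0)
  comm : ∀ i : ℕ, i < n → h i ≫ g i = f i
  tri : ∀ i : ℕ, i < n →
    ∃ d : (B i)⟦(-(i : ℤ))⟧ ⟶ ((B (i + 1))⟦(-((i : ℤ) + 1))⟧)⟦(1 : ℤ)⟧,
      Triangle.mk (g (i + 1)) (h i) d ∈ distTriang C

/-- `X` is a (right) convolution of the length-`n` complex `(A, f)` if there is a Postnikov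
system for it whose final object `B n` is isomorphic to `X`. -/
def IsConvolution (n : ℕ) (A : ℕ → C) (f : ∀ i : ℕ, A (i + 1) ⟶ A i) (X : C) : Prop :=
  ∃ P : PostnikovSystem n A f, Nonempty (P.B n ≅ X)

/-!
Compare two Postnikov systems `P`, `Q` stage by stage, building isomorphisms
`αᵢ : (P.B i)⟦-i⟧ ≅ (Q.B i)⟦-i⟧` over `A i`. The vanishing hypothesis propagates along the
triangles `(B (j+1))⟦-(j+1)⟧ → A (j+1) → (B j)⟦-j⟧` to `Hom((A (j+k+1))⟦k⟧, (B j)⟦-j⟧) = 0`;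
for `k = 1` this makes `Q.g i` injective on maps out of `A (i+1)`, so `αᵢ` is compatible with
`P.h i` and `Q.h i`, and the induced map of triangles gives `αᵢ₊₁`.
-/

namespace CategoryTheory.Pretriangulated

lemma eq_zero_of_comp_mor₁_eq_zero (T : Triangle C) (hT : T ∈ distTriang C) {W : C}
    (hW : ∀ χ : W⟦(1 : ℤ)⟧ ⟶ T.obj₃, χ = 0) (φ : W ⟶ T.obj₁) (hφ : φ ≫ T.mor₁ = 0) :
    φ = 0 := by
  obtain ⟨χ, hχ⟩ := T.coyoneda_exact₁ hT (φ⟦(1 : ℤ)⟧')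
    (by rw [← Functor.map_comp, hφ, Functor.map_zero])
  apply (shiftFunctor C (1 : ℤ)).map_injective
  rw [hχ, hW χ, zero_comp, Functor.map_zero]

lemma exists_iso_obj₁_of_comm₂ (T T' : Triangle C) (hT : T ∈ distTriang C)
    (hT' : T' ∈ distTriang C) (e₂ : T.obj₂ ≅ T'.obj₂) (e₃ : T.obj₃ ≅ T'.obj₃)
    (comm : T.mor₂ ≫ e₃.hom = e₂.hom ≫ T'.mor₂) :
    ∃ e₁ : T.obj₁ ≅ T'.obj₁, T.mor₁ ≫ e₂.hom = e₁.hom ≫ T'.mor₁ := by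
  obtain ⟨a, ha₁, ha₃⟩ := complete_distinguished_triangle_morphism₁ T T' hT hT' e₂.hom e₃.hom comm
  let φ : T ⟶ T' := Triangle.homMk T T' a e₂.hom e₃.hom ha₁ comm ha₃
  have : IsIso a := isIso₁_of_isIso₂₃ φ hT hT' (inferInstanceAs (IsIso e₂.hom))
    (inferInstanceAs (IsIso e₃.hom))
  exact ⟨asIso a, ha₁⟩

end CategoryTheory.Pretriangulated

def ShiftedHomsVanish (n : ℕ) (A : ℕ → C) : Prop :=
  ∀ i k : ℕ, 1 ≤ k → i + k + 1 ≤ n → ∀ φ : (A (i + k + 1))⟦(k : ℤ)⟧ ⟶ A i, φ = 0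

namespace PostnikovSystem

variable {n : ℕ} {A : ℕ → C} {f : ∀ i : ℕ, A (i + 1) ⟶ A i}

-- The index `m` stands apart from `j + k + 1` because `j + 1 + k + 1` and `j + (k + 1) + 1`,
-- which the induction (raising `k` as `j` drops) has to identify, are not definitionally equal.
lemma shift_hom_eq_zero (hvan : ShiftedHomsVanish n A) (P : PostnikovSystem n A f) (j : ℕ) :
    ∀ k m : ℕ, 1 ≤ k → j + k + 1 = m → m ≤ n →
      ∀ φ : (A m)⟦(k : ℤ)⟧ ⟶ (P.B j)⟦(-(j : ℤ))⟧, φ = 0 := by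
  induction j with
  | zero =>
    rintro k m hk rfl hm φ
    have := P.g0_isIso
    exact (cancel_mono (P.g 0)).1 (by rw [zero_comp]; exact hvan 0 k hk hm _)
  | succ j ih =>
    rintro k m hk rfl hm φ
    obtain ⟨d, hd⟩ := P.tri j (by omega)
    refine eq_zero_of_comp_mor₁_eq_zero _ hd (fun χ => ?_) φ (hvan (j + 1) k hk hm _)
    let e : (A (j + 1 + k + 1))⟦((k + 1 : ℕ) : ℤ)⟧ ≅ (A (j + 1 + k + 1))⟦(k : ℤ)⟧⟦(1 : ℤ)⟧ :=
      (shiftFunctorAdd' C (k : ℤ) 1 ((k + 1 : ℕ) : ℤ) (by push_cast; ring)).app _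
    exact (cancel_epi e.hom).1 (by rw [comp_zero]; exact ih (k + 1) _ (by omega) (by omega) hm _)

lemma eq_of_comp_g_eq (hvan : ShiftedHomsVanish n A) (Q : PostnikovSystem n A f) {i : ℕ} (hi : i < n)
    {u v : A (i + 1) ⟶ (Q.B i)⟦(-(i : ℤ))⟧} (huv : u ≫ Q.g i = v ≫ Q.g i) : u = v := by
  cases i with
  | zero =>
    have := Q.g0_isIso
    exact (cancel_mono (Q.g 0)).1 huv
  | succ j =>
    obtain ⟨d, hd⟩ := Q.tri j (by omega)
    have hsub : (u - v) ≫ Q.g (j + 1) = 0 := by rw [Preadditive.sub_comp, huv, sub_self]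
    exact sub_eq_zero.1 <| eq_zero_of_comp_mor₁_eq_zero _ hd
      (Q.shift_hom_eq_zero hvan j 1 (j + 1 + 1) le_rfl rfl hi) (u - v) hsub

lemma exists_iso_shift_B (hvan : ShiftedHomsVanish n A) (P Q : PostnikovSystem n A f) (i : ℕ)
    (hi : i ≤ n) :
    ∃ α : (P.B i)⟦(-(i : ℤ))⟧ ≅ (Q.B i)⟦(-(i : ℤ))⟧, α.hom ≫ Q.g i = P.g i := by
  induction i with
  | zero =>
    have := P.g0_isIso
    have := Q.g0_isIso
    exact ⟨asIso (P.g 0) ≪≫ (asIso (Q.g 0)).symm, by simp⟩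
  | succ i ih =>
    obtain ⟨α, hα⟩ := ih (by omega)
    have hh : P.h i ≫ α.hom = Q.h i := Q.eq_of_comp_g_eq hvan (by omega) (by
      rw [Category.assoc, hα, P.comm i (by omega), Q.comm i (by omega)])
    obtain ⟨dP, hdP⟩ := P.tri i (by omega)
    obtain ⟨dQ, hdQ⟩ := Q.tri i (by omega)
    obtain ⟨β, hβ⟩ := exists_iso_obj₁_of_comm₂ _ _ hdP hdQ (Iso.refl _) α
      (hh.trans (Category.id_comp _).symm)
    exact ⟨β, hβ.symm.trans (Category.comp_id _)⟩

end PostnikovSystem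

theorem convolution_unique_general
    (n : ℕ) (A : ℕ → C) (f : ∀ i : ℕ, A (i + 1) ⟶ A i)
    (hvan : ∀ i k : ℕ, 1 ≤ k → i + k + 1 ≤ n →
      ∀ φ : (A (i + k + 1))⟦(k : ℤ)⟧ ⟶ A i, φ = 0)
    (X Y : C) (hX : IsConvolution n A f X) (hY : IsConvolution n A f Y) :
    Nonempty (X ≅ Y) := by
  obtain ⟨P, ⟨iX⟩⟩ := hX
  obtain ⟨Q, ⟨iY⟩⟩ := hY
  obtain ⟨α, -⟩ := P.exists_iso_shift_B hvan Q n le_rfl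
  exact ⟨iX.symm ≪≫ (shiftFunctor C (-(n : ℤ))).preimageIso α ≪≫ iY⟩

theorem convolution_unique
    (n : ℕ) (A : ℕ → C) (f : ∀ i : ℕ, A (i + 1) ⟶ A i)
    (hcx : ∀ i : ℕ, i + 1 < n → f (i + 1) ≫ f i = 0)
    (hvan : ∀ i k : ℕ, 1 ≤ k → i + k + 1 ≤ n →
      ∀ φ : (A (i + k + 1))⟦(k : ℤ)⟧ ⟶ A i, φ = 0)
    (X Y : C) (hX : IsConvolution n A f X) (hY : IsConvolution n A f Y) :
    Nonempty (X ≅ Y) :=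
  convolution_unique_general n A f hvan X Y hX hY
end

section
/- Let (Q_j)_{j∈ℤ} be a family of objects of C. Let (A_•, f_•) be a complex of length n in C such that each A_i is equipped with an identification A_i = ⊕_{α∈J_i} Q_{d_i(α)} as a finite biproduct, where J_i is a finite index set and d_i : J_i → ℤ. Suppose that for every 1 ≤ i ≤ n the matrix entries of f_i with respect to these biproduct decompositions satisfy: the entry Q_{d_i(α)} ⟶ Q_{d_{i−1}(β)} is zero whenever d_{i−1}(β) < d_i(α), and is equal to c_i(β,α) · id for a scalar c_i(β,α) ∈ k whenever d_{i−1}(β) = d_i(α). Suppose further that for each j ∈ ℤ the complex of finite-dimensional k-vector spaces k^{d_n^{−1}(j)} → k^{d_{n−1}^{−1}(j)} → ⋯ → k^{d_0^{−1}(j)}, with differentials given by the scalar matrices (c_i(β,α)) over pairs with d_i(α) = d_{i−1}(β) = j, is exact at every spot (in particular the first map is injective and the last map is surjective). Then the zero object is a convolution of (A_•, f_•), and moreover every convolution of (A_•, f_•) is isomorphic to the zero object. -/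
open CategoryTheory CategoryTheory.Limits CategoryTheory.Pretriangulated

variable {C : Type*} [Category C] [Preadditive C] [HasZeroObject C] [HasShift C ℤ]
  [∀ n : ℤ, (shiftFunctor C n).Additive] [Pretriangulated C]

/-- The degree-`j` piece of the complex of `k`-vector spaces associated to the data of the
index sets `J`, degrees `d` and scalar entries `c`: the map
`k^{d_{i+1}^{-1}(j)} → k^{d_i^{-1}(j)}` with matrix `(c i β α)`. -/
def scalarMap {k : Type*} [Field k] {J : ℕ → Type} [∀ i, Fintype (J i)]
    (d : ∀ i, J i → ℤ) (c : ∀ i, J i → J (i + 1) → k) (i : ℕ) (j : ℤ)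
    (v : {α : J (i + 1) // d (i + 1) α = j} → k) : {β : J i // d i β = j} → k :=
  fun β => ∑ α : {α : J (i + 1) // d (i + 1) α = j}, c i β.1 α.1 * v α

/-!
Call a morphism `u : A p ⟶ A q` of degree `≥ m` if its entries `Q (d p α) ⟶ Q (d q β)` vanish
whenever `d q β < d p α + m`. The differentials have degree `≥ 0`, and in degree `0` they are the
scalar matrices `c i` tensored with identities. Exactness of the scalar complexes survives
tensoring with the `k`-vector spaces `Q a ⟶ Q b`, so an equation `t ≫ f i = P` (with `P` killed
by `f (i - 1)`) can be solved one degree at a time; as only finitely many degrees occur, this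
builds a contracting homotopy `s` of the complex. A Postnikov system of a contractible complex
consists of split triangles: by induction every `g i` is a split monomorphism on which
`s i ≫ f i` acts as the identity, so `g n = g n ≫ f (n - 1) ≫ s (n - 1) = 0` and `B n = 0`.
Conversely the same split triangles, built by induction, give a Postnikov system.
-/

namespace Matrix

variable {k : Type*} [Field k] {ι₀ ι₁ ι₂ : Type*} [Fintype ι₀] [Fintype ι₁] [Fintype ι₂]
  {H : Type*} [AddCommGroup H] [Module k H]

def smulVec (M : Matrix ι₁ ι₂ k) : (ι₂ → H) →ₗ[k] (ι₁ → H) where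
  toFun v i := ∑ j, M i j • v j
  map_add' v w := by ext i; simp [Finset.sum_add_distrib]
  map_smul' a v := by ext i; simp [Finset.smul_sum, smul_comm a]

omit [Fintype ι₁] in
lemma smulVec_apply (M : Matrix ι₁ ι₂ k) (v : ι₂ → H) (i : ι₁) :
    M.smulVec v i = ∑ j, M i j • v j := rfl

lemma piScalarRight_lTensor_mulVecLin [DecidableEq ι₁] [DecidableEq ι₂] (M : Matrix ι₁ ι₂ k)
    (x : TensorProduct k H (ι₂ → k)) :
    TensorProduct.piScalarRight k k H ι₁ (M.mulVecLin.lTensor H x) =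
      M.smulVec (TensorProduct.piScalarRight k k H ι₂ x) := by
  induction x using TensorProduct.induction_on with
  | zero => simp
  | tmul h v => ext i; simp [smulVec_apply, mulVec, dotProduct, Finset.sum_smul, smul_smul]
  | add x y hx hy => simp only [map_add, hx, hy]

/-- `H ⊗[k] -` is exact (every `k`-module is flat) and `H ⊗[k] (ι → k) ≃ (ι → H)`. -/
lemma exists_smulVec_eq (ψ : Matrix ι₀ ι₁ k) (φ : Matrix ι₁ ι₂ k)
    (h : LinearMap.ker ψ.mulVecLin ≤ LinearMap.range φ.mulVecLin) (v : ι₁ → H)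
    (hv : ψ.smulVec v = 0) : ∃ w, φ.smulVec w = v := by
  classical
  obtain ⟨θ, hθ⟩ := Module.projective_lifting_property φ.mulVecLin.rangeRestrict
    (Submodule.inclusion h) φ.mulVecLin.surjective_rangeRestrict
  have hexact := Module.Flat.lTensor_exact H (LinearMap.exact_subtype_ker_map ψ.mulVecLin)
  obtain ⟨y, hy⟩ := (hexact ((TensorProduct.piScalarRight k k H ι₁).symm v)).1 (by
    apply (TensorProduct.piScalarRight k k H ι₀).injective
    rw [piScalarRight_lTensor_mulVecLin, LinearEquiv.apply_symm_apply, hv, map_zero])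
  refine ⟨TensorProduct.piScalarRight k k H ι₂ (θ.lTensor H y), ?_⟩
  rw [← piScalarRight_lTensor_mulVecLin, ← LinearMap.lTensor_comp_apply]
  have hφθ : φ.mulVecLin ∘ₗ θ = (LinearMap.ker ψ.mulVecLin).subtype :=
    LinearMap.ext fun x => congrArg Subtype.val (LinearMap.congr_fun hθ x)
  rw [hφθ, hy, LinearEquiv.apply_symm_apply]

end Matrix

namespace CategoryTheory.Pretriangulated

lemma exists_retraction_of_distTriang {X Y Z : C} {u : X ⟶ Y} {v : Y ⟶ Z}
    {δ : Z ⟶ X⟦(1 : ℤ)⟧} (hT : Triangle.mk u v δ ∈ distTriang C) (σ : Z ⟶ Y)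
    (hσ : σ ≫ v = 𝟙 Z) : ∃ r : Y ⟶ X, u ≫ r = 𝟙 X ∧ r ≫ u = 𝟙 Y - v ≫ σ := by
  have : IsSplitEpi v := IsSplitEpi.mk' ⟨σ, hσ⟩
  have : Mono u := Triangle.mono₁ _ hT (Triangle.mor₃_eq_zero_of_epi₂ _ hT (inferInstance : Epi v))
  have huv : u ≫ v = 0 := comp_distTriang_mor_zero₁₂ _ hT
  have hker : (𝟙 Y - v ≫ σ) ≫ v = 0 := by
    rw [Preadditive.sub_comp, Category.assoc, hσ, Category.id_comp, Category.comp_id, sub_self]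
  obtain ⟨r, hr⟩ : ∃ r : Y ⟶ X, 𝟙 Y - v ≫ σ = r ≫ u := Triangle.coyoneda_exact₂ _ hT _ hker
  refine ⟨r, ?_, hr.symm⟩
  rw [← cancel_mono u, Category.assoc, ← hr, Preadditive.comp_sub, reassoc_of% huv]
  simp

lemma exists_distTriang_shift_obj₁ {Y Z : C} (v : Y ⟶ Z) (a : ℤ) :
    ∃ (B : C) (u : B⟦a⟧ ⟶ Y) (δ : Z ⟶ (B⟦a⟧)⟦(1 : ℤ)⟧), Triangle.mk u v δ ∈ distTriang C := by
  obtain ⟨W, u, δ, hT⟩ := distinguished_cocone_triangle₁ v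
  let ε := (shiftFunctorCompIsoId C (-a) a (by omega)).app W
  refine ⟨W⟦-a⟧, ε.hom ≫ u, δ ≫ ε.inv⟦(1 : ℤ)⟧', isomorphic_distinguished _ hT _ ?_⟩
  exact Triangle.isoMk _ _ ε (Iso.refl _) (Iso.refl _) (by simp [Triangle.mk])
    (by simp [Triangle.mk]) (by simp [Triangle.mk, ← Functor.map_comp])

end CategoryTheory.Pretriangulated

section ContractingHomotopyDef

variable {D : Type*} [Category D] [Preadditive D]

/-- In diagrammatic order: `𝟙 (A i) = s i ≫ f i + f (i - 1) ≫ s (i - 1)` for `i ≤ n`, where the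
terms through `A (-1)` and `A (n + 1)` are omitted; for `n = 0` both are, so `A 0 = 0`. -/
structure ContractingHomotopy (n : ℕ) (A : ℕ → D) (f : ∀ i : ℕ, A (i + 1) ⟶ A i) where
  s : ∀ i : ℕ, A i ⟶ A (i + 1)
  s_f_zero : 0 < n → s 0 ≫ f 0 = 𝟙 (A 0)
  s_f_add_f_s : ∀ i : ℕ, i + 1 < n → s (i + 1) ≫ f (i + 1) + f i ≫ s i = 𝟙 (A (i + 1))
  f_s_top : ∀ i : ℕ, i + 1 = n → f i ≫ s i = 𝟙 (A (i + 1))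
  id_zero : n = 0 → 𝟙 (A 0) = 0

lemma ContractingHomotopy.s_f_succ {n : ℕ} {A : ℕ → D} {f : ∀ i : ℕ, A (i + 1) ⟶ A i}
    (H : ContractingHomotopy n A f) {i : ℕ} (hi : i + 1 < n) :
    H.s (i + 1) ≫ f (i + 1) = 𝟙 _ - f i ≫ H.s i :=
  eq_sub_of_add_eq (H.s_f_add_f_s i hi)

end ContractingHomotopyDef

section Postnikov

variable {n : ℕ} {A : ℕ → C} {f : ∀ i : ℕ, A (i + 1) ⟶ A i}

lemma PostnikovSystem.g_succ_f (P : PostnikovSystem n A f) {i : ℕ} (hi : i < n) :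
    P.g (i + 1) ≫ f i = 0 := by
  obtain ⟨δ, hT⟩ := P.tri i hi
  have hgh : P.g (i + 1) ≫ P.h i = 0 := comp_distTriang_mor_zero₁₂ _ hT
  rw [← P.comm i hi, reassoc_of% hgh, zero_comp]

namespace ContractingHomotopy

lemma isZero_postnikovSystem_B (H : ContractingHomotopy n A f) (P : PostnikovSystem n A f) :
    IsZero (P.B n) := by
  have hsplit : ∀ i ≤ n, Mono (P.g i) ∧ (i < n → P.g i ≫ H.s i ≫ f i = P.g i) := by
    intro i
    induction i with
    | zero =>
      intro _
      have := P.g0_isIso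
      exact ⟨inferInstance, fun h => by rw [H.s_f_zero h, Category.comp_id]⟩
    | succ i ih =>
      intro hi
      obtain ⟨hmono, hgsf⟩ := ih (by omega)
      obtain ⟨δ, hT⟩ := P.tri i (by omega)
      have hsection : (P.g i ≫ H.s i) ≫ P.h i = 𝟙 _ := by
        rw [← cancel_mono (P.g i), Category.assoc, Category.assoc, P.comm i (by omega),
          hgsf (by omega), Category.id_comp]
      obtain ⟨r, hr, -⟩ := exists_retraction_of_distTriang hT _ hsection
      refine ⟨(IsSplitMono.mk' ⟨r, hr⟩).mono, fun hi' => ?_⟩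
      rw [H.s_f_succ hi', Preadditive.comp_sub, ← Category.assoc, P.g_succ_f (by omega),
        zero_comp, Category.comp_id, sub_zero]
  have hmono := (hsplit n le_rfl).1
  have hg : P.g n = 0 := by
    cases n with
    | zero => rw [← Category.comp_id (P.g 0), H.id_zero rfl, comp_zero]
    | succ m => rw [← Category.comp_id (P.g (m + 1)), ← H.f_s_top m rfl, ← Category.assoc,
        P.g_succ_f (by omega), zero_comp]
  exact IsZero.of_full_of_faithful_of_isZero (shiftFunctor C _) _ (IsZero.of_mono_eq_zero _ hg)

variable (H : ContractingHomotopy n A f)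

structure PostnikovStage (i : ℕ) where
  B : C
  g : B⟦(-(i : ℤ))⟧ ⟶ A i
  r : A i ⟶ B⟦(-(i : ℤ))⟧
  g_r : g ≫ r = 𝟙 _
  f_r_g : i < n → f i ≫ r ≫ g = f i
  g_s_f : i < n → g ≫ H.s i ≫ f i = g

variable {H}

def PostnikovStage.canonical (i : ℕ) (hs : i < n → H.s i ≫ f i = 𝟙 _) : H.PostnikovStage i where
  B := (A i)⟦(i : ℤ)⟧
  g := (shiftFunctorCompIsoId C (i : ℤ) (-(i : ℤ)) (by omega)).hom.app (A i)
  r := (shiftFunctorCompIsoId C (i : ℤ) (-(i : ℤ)) (by omega)).inv.app (A i)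
  g_r := Iso.hom_inv_id_app _ _
  f_r_g _ := by simp
  g_s_f hi := by rw [hs hi, Category.comp_id]

lemma PostnikovStage.exists_succ (hcx : ∀ i : ℕ, i + 1 < n → f (i + 1) ≫ f i = 0) {i : ℕ}
    (hi : i < n) (S : H.PostnikovStage i) :
    ∃ (S' : H.PostnikovStage (i + 1)) (δ : _), Triangle.mk S'.g (f i ≫ S.r) δ ∈ distTriang C := by
  obtain ⟨B, u, δ, hT⟩ := exists_distTriang_shift_obj₁ (f i ≫ S.r) (-((i : ℕ) + 1 : ℤ))
  have hsection : (S.g ≫ H.s i) ≫ f i ≫ S.r = 𝟙 _ := by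
    rw [Category.assoc, reassoc_of% (S.g_s_f hi), S.g_r]
  obtain ⟨r, hur, hru⟩ := exists_retraction_of_distTriang hT _ hsection
  have huf : u ≫ f i = 0 := by
    have hu : u ≫ f i ≫ S.r = 0 := comp_distTriang_mor_zero₁₂ _ hT
    rw [← S.f_r_g hi, reassoc_of% hu, zero_comp]
  refine ⟨⟨B, u, r, hur, fun hi' => ?_, fun hi' => ?_⟩, δ, hT⟩
  · rw [hru, Preadditive.comp_sub, Category.comp_id, Category.assoc, reassoc_of% (hcx i hi'),
      zero_comp, sub_zero]
  · rw [H.s_f_succ hi', Preadditive.comp_sub, reassoc_of% huf, zero_comp, Category.comp_id,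
      sub_zero]

variable (H) in
noncomputable def stage (hcx : ∀ i : ℕ, i + 1 < n → f (i + 1) ≫ f i = 0) :
    ∀ i : ℕ, H.PostnikovStage i
  | 0 => .canonical 0 H.s_f_zero
  | i + 1 =>
    if hi : i < n then (PostnikovStage.exists_succ hcx hi (stage hcx i)).choose
    else .canonical (i + 1) fun h => absurd h (by omega)

lemma stage_succ_distTriang (hcx : ∀ i : ℕ, i + 1 < n → f (i + 1) ≫ f i = 0) {i : ℕ}
    (hi : i < n) : ∃ δ, Triangle.mk (H.stage hcx (i + 1)).g (f i ≫ (H.stage hcx i).r) δ ∈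
      distTriang C := by
  have hstage : H.stage hcx (i + 1) =
      (PostnikovStage.exists_succ hcx hi (H.stage hcx i)).choose := by
    rw [stage, dif_pos hi]
  rw [hstage]
  exact (PostnikovStage.exists_succ hcx hi (H.stage hcx i)).choose_spec

variable (H) in
noncomputable def postnikovSystem (hcx : ∀ i : ℕ, i + 1 < n → f (i + 1) ≫ f i = 0) :
    PostnikovSystem n A f where
  B i := (H.stage hcx i).B
  g i := (H.stage hcx i).g
  h i := f i ≫ (H.stage hcx i).r
  g0_isIso := by dsimp [stage, PostnikovStage.canonical]; infer_instance
  comm i hi := by rw [Category.assoc]; exact (H.stage hcx i).f_r_g hi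
  tri i hi := H.stage_succ_distTriang hcx hi

end ContractingHomotopy

end Postnikov

section Entries

variable {D : Type*} [Category D] [Preadditive D] [HasFiniteBiproducts D]
  {Q : ℤ → D} {J : ℕ → Type} [∀ i, Fintype (J i)] {d : ∀ i, J i → ℤ} {A : ℕ → D}
  (e : ∀ i, A i ≅ ⨁ fun α : J i => Q (d i α))

noncomputable def entry {p q : ℕ} (u : A p ⟶ A q) (α : J p) (β : J q) : Q (d p α) ⟶ Q (d q β) :=
  biproduct.ι (fun α => Q (d p α)) α ≫ (e p).inv ≫ u ≫ (e q).hom ≫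
    biproduct.π (fun β => Q (d q β)) β

lemma entry_ext {p q : ℕ} {u v : A p ⟶ A q} (h : ∀ α β, entry e u α β = entry e v α β) :
    u = v := by
  rw [← cancel_epi (e p).inv, ← cancel_mono (e q).hom]
  ext β α
  simpa [entry] using h α β

lemma entry_comp {p q r : ℕ} (u : A p ⟶ A q) (v : A q ⟶ A r) (α : J p) (γ : J r) :
    entry e (u ≫ v) α γ = ∑ β, entry e u α β ≫ entry e v β γ := by
  have huv : u ≫ v = u ≫ (e q).hom ≫
      (∑ β, biproduct.π (fun β => Q (d q β)) β ≫ biproduct.ι (fun β => Q (d q β)) β) ≫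
        (e q).inv ≫ v := by
    simp [biproduct.total]
  simp only [entry, huv, Preadditive.sum_comp, Preadditive.comp_sum, Category.assoc]

@[simp]
lemma entry_zero {p q : ℕ} (α : J p) (β : J q) : entry e (0 : A p ⟶ A q) α β = 0 := by
  simp [entry]

@[simp]
lemma entry_sub {p q : ℕ} (u v : A p ⟶ A q) (α : J p) (β : J q) :
    entry e (u - v) α β = entry e u α β - entry e v α β := by
  simp [entry]

@[simp]
lemma entry_add {p q : ℕ} (u v : A p ⟶ A q) (α : J p) (β : J q) :
    entry e (u + v) α β = entry e u α β + entry e v α β := by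
  simp [entry]

lemma entry_id_of_ne {p : ℕ} {α β : J p} (h : α ≠ β) : entry e (𝟙 (A p)) α β = 0 := by
  simp [entry, biproduct.ι_π_ne _ h]

noncomputable def ofEntries {p q : ℕ} (M : ∀ α β, Q (d p α) ⟶ Q (d q β)) : A p ⟶ A q :=
  (e p).hom ≫ biproduct.matrix M ≫ (e q).inv

@[simp]
lemma entry_ofEntries {p q : ℕ} (M : ∀ α β, Q (d p α) ⟶ Q (d q β)) (α : J p) (β : J q) :
    entry e (ofEntries e M) α β = M α β := by
  simp [entry, ofEntries]

include e in
lemma id_eq_zero_of_isEmpty {p : ℕ} [IsEmpty (J p)] : 𝟙 (A p) = 0 :=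
  entry_ext e fun α => isEmptyElim α

def DegreeGE {p q : ℕ} (m : ℕ) (u : A p ⟶ A q) : Prop :=
  ∀ α β, d q β < d p α + m → entry e u α β = 0

variable {e}

lemma DegreeGE.mono {p q : ℕ} {m m' : ℕ} {u : A p ⟶ A q} (hu : DegreeGE e m u) (h : m' ≤ m) :
    DegreeGE e m' u :=
  fun α β hd => hu α β (by omega)

lemma DegreeGE.zero {p q : ℕ} (m : ℕ) : DegreeGE e m (0 : A p ⟶ A q) :=
  fun α β _ => entry_zero e α β

lemma DegreeGE.add {p q : ℕ} {m : ℕ} {u v : A p ⟶ A q} (hu : DegreeGE e m u)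
    (hv : DegreeGE e m v) : DegreeGE e m (u + v) := by
  intro α β hd
  simp [entry_add, hu α β hd, hv α β hd]

lemma DegreeGE.sub {p q : ℕ} {m : ℕ} {u v : A p ⟶ A q} (hu : DegreeGE e m u)
    (hv : DegreeGE e m v) : DegreeGE e m (u - v) := by
  intro α β hd
  simp [hu α β hd, hv α β hd]

lemma DegreeGE.comp {p q r : ℕ} {a b : ℕ} {u : A p ⟶ A q} {v : A q ⟶ A r}
    (hu : DegreeGE e a u) (hv : DegreeGE e b v) : DegreeGE e (a + b) (u ≫ v) := by
  intro α γ hd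
  rw [entry_comp]
  refine Finset.sum_eq_zero fun β _ => ?_
  by_cases hβ : d q β < d p α + a
  · rw [hu α β hβ, zero_comp]
  · rw [hv β γ (by omega), comp_zero]

variable (e) in
lemma degreeGE_id {p : ℕ} : DegreeGE e 0 (𝟙 (A p)) :=
  fun _ _ hd => entry_id_of_ne e (by rintro rfl; omega)

variable (e) in
lemma exists_eq_zero_of_degreeGE (p q : ℕ) :
    ∃ M : ℕ, ∀ u : A p ⟶ A q, DegreeGE e M u → u = 0 := by
  obtain ⟨M, hM⟩ := Finite.exists_le fun x : J p × J q => (d q x.2 - d p x.1).toNat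
  refine ⟨M + 1, fun u hu => entry_ext e fun α β => ?_⟩
  have hαβ := hM (α, β)
  dsimp only at hαβ
  rw [hu α β (by omega), entry_zero]

variable (e) in
/-- Composing with `eqToHom` puts all entries of the row in the single `k`-module
`Q (d p α) ⟶ Q j`. -/
noncomputable def rowVec {p q : ℕ} (u : A p ⟶ A q) (α : J p) (j : ℤ) :
    {β : J q // d q β = j} → (Q (d p α) ⟶ Q j) :=
  fun β => entry e u α β ≫ eqToHom (congrArg Q β.2)

lemma rowVec_sub {p q : ℕ} (u v : A p ⟶ A q) (α : J p) (j : ℤ) :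
    rowVec e (u - v) α j = rowVec e u α j - rowVec e v α j := by
  ext β
  simp [rowVec, Preadditive.sub_comp]

lemma DegreeGE.succ {p q : ℕ} {m : ℕ} {u : A p ⟶ A q} (hu : DegreeGE e m u)
    (hrow : ∀ α, rowVec e u α (d p α + m) = 0) : DegreeGE e (m + 1) u := by
  intro α β hd
  by_cases hβ : d q β < d p α + m
  · exact hu α β hβ
  · have hβ' : d q β = d p α + m := by omega
    simpa [rowVec] using congrFun (hrow α) ⟨β, hβ'⟩

variable (e) in
lemma exists_degreeGE_rowVec_eq {p q : ℕ} (m : ℕ)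
    (w : ∀ α : J p, {β : J q // d q β = d p α + m} → (Q (d p α) ⟶ Q (d p α + m))) :
    ∃ u : A p ⟶ A q, DegreeGE e m u ∧ ∀ α, rowVec e u α (d p α + m) = w α := by
  classical
  refine ⟨ofEntries e fun α β => if h : d q β = d p α + m then
    w α ⟨β, h⟩ ≫ eqToHom (congrArg Q h.symm) else 0, fun α β hd => ?_, fun α => ?_⟩
  · rw [entry_ofEntries, dif_neg (by omega)]
  · ext ⟨β, hβ⟩
    simp [rowVec, dif_pos hβ]

end Entries

section DegreeFiltration

variable {k : Type*} [Field k] {D : Type*} [Category D] [Preadditive D] [Linear k D]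
  [HasFiniteBiproducts D] {Q : ℤ → D} {J : ℕ → Type} [∀ i, Fintype (J i)] {d : ∀ i, J i → ℤ}
  {A : ℕ → D} {e : ∀ i, A i ≅ ⨁ fun α : J i => Q (d i α)} (c : ∀ i, J i → J (i + 1) → k)

variable (d) in
/-- `(scalarMatrix d c i j).mulVec` is definitionally `scalarMap d c i j`, so the exactness
hypotheses can be used directly as kernel-in-range statements. -/
def scalarMatrix (i : ℕ) (j : ℤ) :
    Matrix {β : J i // d i β = j} {α : J (i + 1) // d (i + 1) α = j} k :=
  fun β α => c i β.1 α.1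

lemma rowVec_comp {p i m : ℕ} {u : A p ⟶ A (i + 1)} (hu : DegreeGE e m u) {g : A (i + 1) ⟶ A i}
    (hlow : ∀ α β, d i β < d (i + 1) α → entry e g α β = 0)
    (hdiag : ∀ α β (hd : d (i + 1) α = d i β), entry e g α β = c i β α • eqToHom (congrArg Q hd))
    (α : J p) :
    rowVec e (u ≫ g) α (d p α + m) =
      (scalarMatrix d c i _).smulVec (rowVec e u α (d p α + m)) := by
  classical
  ext ⟨γ, hγ⟩
  rw [rowVec, entry_comp, Preadditive.sum_comp, Matrix.smulVec_apply,
    ← Fintype.sum_subtype_add_sum_subtype (fun β => d (i + 1) β = d p α + m)]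
  refine (congrArg (_ + ·) (Finset.sum_eq_zero fun ⟨β, hβ⟩ _ => ?_)).trans
    ((add_zero _).trans (Finset.sum_congr rfl fun ⟨β, hβ⟩ _ => ?_))
  · simp [rowVec, scalarMatrix, hdiag β γ (hβ.trans hγ.symm)]
  · rcases lt_or_gt_of_ne hβ with hlt | hgt
    · rw [hu α β (by omega), zero_comp, zero_comp]
    · rw [hlow β γ (by omega), comp_zero, zero_comp]

variable {n : ℕ} {f : ∀ i, A (i + 1) ⟶ A i}
  (hlow : ∀ i : ℕ, i < n → ∀ (α : J (i + 1)) (β : J i), d i β < d (i + 1) α →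
    entry e (f i) α β = 0)
  (hdiag : ∀ i : ℕ, i < n → ∀ (α : J (i + 1)) (β : J i) (hd : d (i + 1) α = d i β),
    entry e (f i) α β = c i β α • eqToHom (congrArg Q hd))

include hlow in
omit [Linear k D] in
lemma degreeGE_f {i : ℕ} (hi : i < n) : DegreeGE e 0 (f i) :=
  fun α β h => hlow i hi α β (by simpa using h)

include hlow hdiag in
lemma smulVec_rowVec_eq_zero {p i m : ℕ} (hi : i < n) {E : A p ⟶ A (i + 1)}
    (hE : DegreeGE e m E) (hEf : E ≫ f i = 0) (α : J p) :
    (scalarMatrix d c i _).smulVec (rowVec e E α (d p α + m)) = 0 := by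
  rw [← rowVec_comp c hE (hlow i hi) (hdiag i hi), hEf]
  ext β
  simp [rowVec]

include hlow hdiag in
lemma exists_degreeGE_succ_sub {p i m : ℕ} (hi : i < n) {E : A p ⟶ A i} (hE : DegreeGE e m E)
    (hrow : ∀ α, ∃ w, (scalarMatrix d c i (d p α + m)).smulVec w = rowVec e E α (d p α + m)) :
    ∃ t : A p ⟶ A (i + 1), DegreeGE e m t ∧ DegreeGE e (m + 1) (E - t ≫ f i) := by
  choose w hw using hrow
  obtain ⟨t, ht, htw⟩ := exists_degreeGE_rowVec_eq e m w
  refine ⟨t, ht, (hE.sub (ht.comp (degreeGE_f hlow hi))).succ fun α => ?_⟩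
  rw [rowVec_sub, rowVec_comp c ht (hlow i hi) (hdiag i hi), htw, hw, sub_self]

include hlow hdiag in
lemma exists_degreeGE_comp_eq {p i : ℕ} (hi : i < n) {X : D} (g : A i ⟶ X) (hfg : f i ≫ g = 0)
    (hrow : ∀ (m : ℕ) (E : A p ⟶ A i), DegreeGE e m E → E ≫ g = 0 →
      ∀ α, ∃ w, (scalarMatrix d c i (d p α + m)).smulVec w = rowVec e E α (d p α + m))
    {P : A p ⟶ A i} (hP : DegreeGE e 0 P) (hPg : P ≫ g = 0) :
    ∃ t : A p ⟶ A (i + 1), DegreeGE e 0 t ∧ t ≫ f i = P := by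
  have happrox : ∀ m, ∃ t : A p ⟶ A (i + 1), DegreeGE e 0 t ∧ DegreeGE e m (P - t ≫ f i) := by
    intro m
    induction m with
    | zero => exact ⟨0, DegreeGE.zero 0, by simpa using hP⟩
    | succ m ih =>
      obtain ⟨t, ht, hPt⟩ := ih
      have hg : (P - t ≫ f i) ≫ g = 0 := by simp [Preadditive.sub_comp, hPg, hfg]
      obtain ⟨t', ht', hPt'⟩ := exists_degreeGE_succ_sub c hlow hdiag hi hPt (hrow m _ hPt hg)
      refine ⟨t + t', ht.add (ht'.mono (Nat.zero_le m)), ?_⟩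
      rwa [Preadditive.add_comp, ← sub_sub]
  obtain ⟨M, hM⟩ := exists_eq_zero_of_degreeGE e p i
  obtain ⟨t, ht, hPt⟩ := happrox M
  exact ⟨t, ht, (sub_eq_zero.mp (hM _ hPt)).symm⟩

variable (hcx : ∀ i : ℕ, i + 1 < n → f (i + 1) ≫ f i = 0)
  (hex_mid : ∀ i : ℕ, i + 1 < n → ∀ (j : ℤ) (v : {α : J (i + 1) // d (i + 1) α = j} → k),
    scalarMap d c i j v = 0 → ∃ w, scalarMap d c (i + 1) j w = v)
  (hex_top : ∀ i : ℕ, i + 1 = n → ∀ (j : ℤ) (v : {α : J (i + 1) // d (i + 1) α = j} → k),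
    scalarMap d c i j v = 0 → v = 0)
  (hex_bot : 0 < n → ∀ (j : ℤ) (w : {β : J 0 // d 0 β = j} → k),
    ∃ v, scalarMap d c 0 j v = w)
  (hex_zero : n = 0 → ∀ (j : ℤ) (w : {β : J 0 // d 0 β = j} → k), w = 0)

include hlow hdiag hex_bot in
lemma exists_degreeGE_comp_f_zero_eq {p : ℕ} (hn : 0 < n) {P : A p ⟶ A 0}
    (hP : DegreeGE e 0 P) : ∃ t : A p ⟶ A 1, DegreeGE e 0 t ∧ t ≫ f 0 = P :=
  exists_degreeGE_comp_eq c hlow hdiag hn (0 : A 0 ⟶ A 0) comp_zero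
    (fun _ _ _ _ _ => Matrix.exists_smulVec_eq (0 : Matrix Empty _ k) _
      (fun v _ => hex_bot hn _ v) _ (Subsingleton.elim _ _)) hP comp_zero

include hcx hlow hdiag hex_mid in
lemma exists_degreeGE_comp_f_succ_eq {p i : ℕ} (hi : i + 1 < n) {P : A p ⟶ A (i + 1)}
    (hP : DegreeGE e 0 P) (hPf : P ≫ f i = 0) :
    ∃ t : A p ⟶ A (i + 2), DegreeGE e 0 t ∧ t ≫ f (i + 1) = P :=
  exists_degreeGE_comp_eq c hlow hdiag hi (f i) (hcx i hi)
    (fun _ _ hE hEf α => Matrix.exists_smulVec_eq _ _ (fun v hv => hex_mid i hi _ v hv) _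
      (smulVec_rowVec_eq_zero c hlow hdiag (by omega) hE hEf α)) hP hPf

include hlow hdiag hex_top in
lemma eq_zero_of_degreeGE_of_comp_f_eq_zero {p i : ℕ} (hi : i + 1 = n) {P : A p ⟶ A (i + 1)}
    (hP : DegreeGE e 0 P) (hPf : P ≫ f i = 0) : P = 0 := by
  have hdeg : ∀ m, DegreeGE e m P := by
    intro m
    induction m with
    | zero => exact hP
    | succ m ih =>
      refine ih.succ fun α => ?_
      obtain ⟨w, hw⟩ := Matrix.exists_smulVec_eq _ (0 : Matrix _ Empty k)
        (fun v hv => ⟨0, by rw [hex_top i hi _ v hv]; simp⟩) _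
        (smulVec_rowVec_eq_zero c hlow hdiag (by omega) ih hPf α)
      rw [← hw]
      ext
      simp [Matrix.smulVec_apply]
  obtain ⟨M, hM⟩ := exists_eq_zero_of_degreeGE e p (i + 1)
  exact hM P (hdeg M)

open Classical in
variable (e f) in
/-- The `else 0` branches are never taken under the hypotheses of `degreeHomotopy_spec`. -/
noncomputable def degreeHomotopy : ∀ i : ℕ, A i ⟶ A (i + 1)
  | 0 => if h : ∃ t, DegreeGE e 0 t ∧ t ≫ f 0 = 𝟙 (A 0) then h.choose else 0
  | i + 1 =>
    if h : ∃ t, DegreeGE e 0 t ∧ t ≫ f (i + 1) = 𝟙 (A (i + 1)) - f i ≫ degreeHomotopy i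
    then h.choose else 0

include hlow hdiag hex_bot in
lemma degreeHomotopy_zero_spec (hn : 0 < n) :
    DegreeGE e 0 (degreeHomotopy e f 0) ∧ degreeHomotopy e f 0 ≫ f 0 = 𝟙 (A 0) := by
  have h := exists_degreeGE_comp_f_zero_eq c hlow hdiag hex_bot hn (degreeGE_id e)
  rw [degreeHomotopy, dif_pos h]
  exact h.choose_spec

include hlow in
omit [Linear k D] in
lemma degreeGE_id_sub_f_comp_and_comp_f_eq_zero {i : ℕ} (hi : i < n) {s : A i ⟶ A (i + 1)}
    (hs : DegreeGE e 0 s) (hfsf : f i ≫ s ≫ f i = f i) :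
    DegreeGE e 0 (𝟙 _ - f i ≫ s) ∧ (𝟙 _ - f i ≫ s) ≫ f i = 0 :=
  ⟨(degreeGE_id e).sub ((degreeGE_f hlow hi).comp hs), by simp [Preadditive.sub_comp, hfsf]⟩

include hcx hlow hdiag hex_mid in
lemma degreeHomotopy_succ_spec {i : ℕ} (hi : i + 1 < n) (hs : DegreeGE e 0 (degreeHomotopy e f i))
    (hfsf : f i ≫ degreeHomotopy e f i ≫ f i = f i) :
    DegreeGE e 0 (degreeHomotopy e f (i + 1)) ∧
      degreeHomotopy e f (i + 1) ≫ f (i + 1) = 𝟙 _ - f i ≫ degreeHomotopy e f i := by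
  obtain ⟨hP, hPf⟩ := degreeGE_id_sub_f_comp_and_comp_f_eq_zero hlow (by omega) hs hfsf
  have h := exists_degreeGE_comp_f_succ_eq c hlow hdiag hcx hex_mid hi hP hPf
  rw [degreeHomotopy, dif_pos h]
  exact h.choose_spec

include hcx hlow hdiag hex_mid hex_bot in
lemma degreeHomotopy_spec {i : ℕ} (hi : i < n) :
    DegreeGE e 0 (degreeHomotopy e f i) ∧ f i ≫ degreeHomotopy e f i ≫ f i = f i := by
  induction i with
  | zero =>
    obtain ⟨hs, hsf⟩ := degreeHomotopy_zero_spec c hlow hdiag hex_bot hi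
    exact ⟨hs, by rw [hsf, Category.comp_id]⟩
  | succ i ih =>
    obtain ⟨hs, hsf⟩ := ih (by omega)
    obtain ⟨hs', hsf'⟩ := degreeHomotopy_succ_spec c hlow hdiag hcx hex_mid hi hs hsf
    refine ⟨hs', ?_⟩
    rw [hsf', Preadditive.comp_sub, Category.comp_id, reassoc_of% (hcx i hi), zero_comp, sub_zero]

noncomputable def contractingHomotopyOfExact : ContractingHomotopy n A f where
  s := degreeHomotopy e f
  s_f_zero hn := (degreeHomotopy_zero_spec c hlow hdiag hex_bot hn).2
  s_f_add_f_s i hi := by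
    obtain ⟨hs, hsf⟩ := degreeHomotopy_spec c hlow hdiag hcx hex_mid hex_bot (i := i) (by omega)
    rw [(degreeHomotopy_succ_spec c hlow hdiag hcx hex_mid hi hs hsf).2, sub_add_cancel]
  f_s_top i hi := by
    obtain ⟨hs, hsf⟩ := degreeHomotopy_spec c hlow hdiag hcx hex_mid hex_bot (i := i) (by omega)
    obtain ⟨hP, hPf⟩ := degreeGE_id_sub_f_comp_and_comp_f_eq_zero hlow (by omega) hs hsf
    exact (sub_eq_zero.mp
      (eq_zero_of_degreeGE_of_comp_f_eq_zero c hlow hdiag hex_top hi hP hPf)).symm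
  id_zero hn := by
    have : IsEmpty (J 0) :=
      ⟨fun β => one_ne_zero (congrFun (hex_zero hn (d 0 β) fun _ => (1 : k)) ⟨β, rfl⟩)⟩
    exact id_eq_zero_of_isEmpty e

end DegreeFiltration

theorem exact_complex_convolution_zero
    {k : Type*} [Field k] [Linear k C] [HasFiniteBiproducts C]
    (Q : ℤ → C)
    (n : ℕ) (A : ℕ → C) (f : ∀ i : ℕ, A (i + 1) ⟶ A i)
    (hcx : ∀ i : ℕ, i + 1 < n → f (i + 1) ≫ f i = 0)
    -- identifications of the terms with finite biproducts of the `Q j`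
    (J : ℕ → Type) [∀ i, Fintype (J i)]
    (d : ∀ i, J i → ℤ)
    (e : ∀ i, A i ≅ ⨁ fun α : J i => Q (d i α))
    (c : ∀ i, J i → J (i + 1) → k)
    -- no matrix entries of negative degree
    (hlow : ∀ i : ℕ, i < n → ∀ (α : J (i + 1)) (β : J i), d i β < d (i + 1) α →
      biproduct.ι (fun α : J (i + 1) => Q (d (i + 1) α)) α ≫ (e (i + 1)).inv ≫ f i ≫
        (e i).hom ≫ biproduct.π (fun β : J i => Q (d i β)) β = 0)
    -- degree-zero matrix entries are the scalars `c i β α • id`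
    (hdiag : ∀ i : ℕ, i < n → ∀ (α : J (i + 1)) (β : J i) (hd : d (i + 1) α = d i β),
      biproduct.ι (fun α : J (i + 1) => Q (d (i + 1) α)) α ≫ (e (i + 1)).inv ≫ f i ≫
        (e i).hom ≫ biproduct.π (fun β : J i => Q (d i β)) β
        = c i β α • eqToHom (congrArg Q hd))
    -- exactness of the scalar complexes `k^{d_n^{-1}(j)} → ⋯ → k^{d_0^{-1}(j)}` at every spot:
    -- at the middle spots,
    (hex_mid : ∀ i : ℕ, i + 1 < n → ∀ (j : ℤ) (v : {α : J (i + 1) // d (i + 1) α = j} → k),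
      scalarMap d c i j v = 0 → ∃ w, scalarMap d c (i + 1) j w = v)
    -- at the top spot (the first map is injective),
    (hex_top : ∀ i : ℕ, i + 1 = n → ∀ (j : ℤ) (v : {α : J (i + 1) // d (i + 1) α = j} → k),
      scalarMap d c i j v = 0 → v = 0)
    -- at the bottom spot (the last map is surjective),
    (hex_bot : 0 < n → ∀ (j : ℤ) (w : {β : J 0 // d 0 β = j} → k),
      ∃ v, scalarMap d c 0 j v = w)
    -- and in the degenerate case `n = 0` exactness means the complex vanishes
    (hex_zero : n = 0 → ∀ (j : ℤ) (w : {β : J 0 // d 0 β = j} → k), w = 0) :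
    (∃ P : PostnikovSystem n A f, IsZero (P.B n)) ∧
      (∀ X : C, IsConvolution n A f X → IsZero X) := by
  let H := contractingHomotopyOfExact c hlow hdiag hcx hex_mid hex_top hex_bot hex_zero
  exact ⟨⟨H.postnikovSystem hcx, H.isZero_postnikovSystem_B _⟩,
    fun X ⟨P, ⟨φ⟩⟩ => (H.isZero_postnikovSystem_B P).of_iso φ.symm⟩
end

section
/- Let X = ⊕_{t∈T} Q⟨i_t⟩ be a finite biproduct of shifts of Q (T a finite index set, i_t ∈ ℤ). If f : X ⟶ X is an isomorphism and δ : X ⟶ X is a Q-infinitesimal morphism, then f + δ is an isomorphism. -/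
/-!
Statement 7: Let `X = ⊕_{t∈T} Q⟨i_t⟧` be a finite biproduct of shifts of `Q`.  If
`f : X ⟶ X` is an isomorphism and `δ : X ⟶ X` is `Q`-infinitesimal, then `f + δ` is an
isomorphism.
-/

open CategoryTheory CategoryTheory.Limits

variable {k : Type*} [Field k] {C : Type*} [Category C] [Preadditive C] [Linear k C]
  [HasShift C ℤ] [∀ n : ℤ, (shiftFunctor C n).Additive]

/-- A morphism `f : X ⟶ Y` is `Q`-infinitesimal if every composite
`Q⟨i⟩ ⟶ X ⟶ Y ⟶ Q⟨i⟩` through it vanishes. -/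
def QInf (Q : C) {X Y : C} (f : X ⟶ Y) : Prop :=
  ∀ (m : ℤ) (α : (Q⟦m⟧ : C) ⟶ X) (β : Y ⟶ (Q⟦m⟧ : C)), α ≫ f ≫ β = 0

theorem iso_plus_infinitesimal_is_iso
    [IsIdempotentComplete C] [HasFiniteBiproducts C]
    (Q : C)
    (hQneg : ∀ i : ℤ, i < 0 → ∀ f : Q ⟶ (Q⟦i⟧ : C), f = 0)
    (hQend : ∀ f : Q ⟶ Q, ∃ cst : k, f = cst • 𝟙 Q)
    (T : Type) [Fintype T] (iT : T → ℤ)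
    (f δ : (⨁ fun t : T => (Q⟦iT t⟧ : C)) ⟶ ⨁ fun t : T => (Q⟦iT t⟧ : C))
    (hf : IsIso f) (hδ : QInf Q δ) :
    IsIso (f + δ) := by
  classical
  -- vanishing of morphisms that strictly decrease the shift
  have hshift : ∀ a b : ℤ, b < a → ∀ g : (Q⟦a⟧ : C) ⟶ (Q⟦b⟧ : C), g = 0 := by
    intro a b hba g
    have hA : ((shiftFunctor C (-a)).obj (Q⟦a⟧ : C)) ≅ Q :=
      (shiftFunctorCompIsoId C a (-a) (add_neg_cancel a)).app Q
    have hB : ((shiftFunctor C (-a)).obj (Q⟦b⟧ : C)) ≅ (Q⟦b + -a⟧ : C) :=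
      ((shiftFunctorAdd C b (-a)).app Q).symm
    have h0 : hA.inv ≫ (shiftFunctor C (-a)).map g ≫ hB.hom = 0 :=
      hQneg (b + -a) (by omega) _
    have hmap : (shiftFunctor C (-a)).map g = 0 := by
      have := congrArg (fun x => hA.hom ≫ x ≫ hB.inv) h0
      simpa using this
    apply (shiftFunctor C (-a)).map_injective
    rw [hmap, Functor.map_zero]
  -- "raises the shift by at least d" predicate
  set P : ℕ → ((⨁ fun t : T => (Q⟦iT t⟧ : C)) ⟶ ⨁ fun t : T => (Q⟦iT t⟧ : C)) → Prop :=
    fun d g => ∀ s t : T, iT t < iT s + d →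
      biproduct.ι (fun t : T => (Q⟦iT t⟧ : C)) s ≫ g ≫
        biproduct.π (fun t : T => (Q⟦iT t⟧ : C)) t = 0 with hP
  have P0 : ∀ g, P 0 g := by
    intro g s t hlt
    exact hshift (iT s) (iT t) (by omega) _
  have Pδ : P 1 δ := by
    intro s t hlt
    rcases lt_or_eq_of_le (show iT t ≤ iT s by omega) with h | h
    · exact hshift (iT s) (iT t) h _
    · have h' : (Q⟦iT t⟧ : C) = (Q⟦iT s⟧ : C) := by rw [h]
      have h0 := hδ (iT s) (biproduct.ι (fun t : T => (Q⟦iT t⟧ : C)) s)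
        (biproduct.π (fun t : T => (Q⟦iT t⟧ : C)) t ≫ eqToHom h')
      rw [← cancel_mono (eqToHom h')]
      simpa using h0
  have Pcomp : ∀ (a b : ℕ) (g h : (⨁ fun t : T => (Q⟦iT t⟧ : C)) ⟶ _),
      P a g → P b h → P (a + b) (g ≫ h) := by
    intro a b g h hg hh s t hlt
    rw [show g ≫ h = g ≫ 𝟙 _ ≫ h by simp, ← biproduct.total]
    simp only [Preadditive.sum_comp, Preadditive.comp_sum, Category.assoc]
    apply Finset.sum_eq_zero
    intro u _
    have hassoc : biproduct.ι (fun t : T => (Q⟦iT t⟧ : C)) s ≫ g ≫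
          biproduct.π (fun t : T => (Q⟦iT t⟧ : C)) u ≫
          biproduct.ι (fun t : T => (Q⟦iT t⟧ : C)) u ≫ h ≫
          biproduct.π (fun t : T => (Q⟦iT t⟧ : C)) t
        = (biproduct.ι (fun t : T => (Q⟦iT t⟧ : C)) s ≫ g ≫
            biproduct.π (fun t : T => (Q⟦iT t⟧ : C)) u) ≫
          (biproduct.ι (fun t : T => (Q⟦iT t⟧ : C)) u ≫ h ≫
            biproduct.π (fun t : T => (Q⟦iT t⟧ : C)) t) := by
      simp only [Category.assoc]
    rw [hassoc]
    by_cases hu : iT u < iT s + a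
    · rw [hg s u hu, zero_comp]
    · rw [hh u t (by push_cast at hlt ⊢; omega), comp_zero]
  -- the perturbation
  set ε : End (⨁ fun t : T => (Q⟦iT t⟧ : C)) := inv f ≫ δ with hεdef
  have hε : P 1 ε := by
    have := Pcomp 0 1 (inv f) δ (P0 (inv f)) Pδ
    simpa using this
  have hpow : ∀ n : ℕ, P (n + 1) (ε ^ (n + 1) : End _) := by
    intro n
    induction n with
    | zero => simpa [pow_one] using hε
    | succ m ih =>
      have hmul : (ε ^ (m + 2) : End _) = (ε : _ ⟶ _) ≫ (ε ^ (m + 1) : End _) := by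
        rw [pow_succ]
        rfl
      have := Pcomp 1 (m + 1) ε (ε ^ (m + 1) : End _) hε ih
      rw [show 1 + (m + 1) = m + 2 by omega] at this
      rw [hmul]
      exact this
  -- a bound making powers vanish
  set N : ℕ := (Finset.univ.sup fun s : T =>
    Finset.univ.sup fun t : T => (iT t - iT s).toNat) + 1 with hNdef
  have hN : ∀ s t : T, iT t < iT s + N := by
    intro s t
    have h1 : (iT t - iT s).toNat ≤ Finset.univ.sup fun t : T => (iT t - iT s).toNat :=
      Finset.le_sup (f := fun t : T => (iT t - iT s).toNat) (Finset.mem_univ t)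
    have h2 : (Finset.univ.sup fun t : T => (iT t - iT s).toNat) ≤
        Finset.univ.sup fun s : T => Finset.univ.sup fun t : T => (iT t - iT s).toNat :=
      Finset.le_sup (f := fun s : T => Finset.univ.sup fun t : T => (iT t - iT s).toNat)
        (Finset.mem_univ s)
    have h3 : (iT t - iT s).toNat + 1 ≤ N := by omega
    omega
  have hnil : IsNilpotent ε := by
    refine ⟨N, ?_⟩
    have hPN : P N (ε ^ N : End _) := by
      obtain ⟨m, hm⟩ : ∃ m, N = m + 1 := ⟨N - 1, by omega⟩
      rw [hm]; exact hpow m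
    show (ε ^ N : End _) = (0 : _ ⟶ _)
    apply biproduct.hom_ext
    intro t
    apply biproduct.hom_ext'
    intro s
    have := hPN s t (hN s t)
    simpa using this
  have hunit : IsUnit ((1 : End _) + ε) := hnil.isUnit_one_add
  have hiso : IsIso ((1 : End (⨁ fun t : T => (Q⟦iT t⟧ : C))) + ε) :=
    (isUnit_iff_isIso _).mp hunit
  have hiso' : IsIso (𝟙 (⨁ fun t : T => (Q⟦iT t⟧ : C)) + inv f ≫ δ) := hiso
  have hfactor : f + δ = f ≫ (𝟙 (⨁ fun t : T => (Q⟦iT t⟧ : C)) + inv f ≫ δ) := by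
    simp [Preadditive.comp_add]
  rw [hfactor]
  infer_instance
end

section
/- Let k be a field and C a k-linear additive category which is idempotent complete and in which every Hom-space is finite-dimensional over k. Then for objects A, B, C' of C: (a) if A ⊕ B ≅ A ⊕ C' then B ≅ C'; and (b) if B^{⊕n} ≅ C'^{⊕n} for some integer n ≥ 1, then B ≅ C'. -/
/-!
An object `A` whose endomorphism ring is local cancels from biproducts: if the corner `A ⟶ A` of
an isomorphism `A ⊞ B ≅ A ⊞ B'` is not invertible, locality makes `A` a retract of `B'`, and a
shear automorphism of `A ⊞ B'` turns the corner into an invertible one.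

Over a field with finite-dimensional Hom-spaces, Fitting's lemma makes `End X` local as soon as it
has no nontrivial idempotents, and idempotent completeness splits the nontrivial ones; so, by
induction on `dim End X`, every object is assembled from summands with local endomorphism rings,
and `A` cancels one local summand at a time. For `B^{⊕n} ≅ B'^{⊕n}`, a local summand `L` of `B`
is a retract of `B'^{⊕n}`, hence, by locality again, of `B'`; cancelling `L^{⊕n}` leaves the same
situation for the complements of `L`.
-/

open CategoryTheory CategoryTheory.Limits

theorem IsLocalRing.mul_eq_one_symm {R : Type*} [Ring R] [IsLocalRing R] {a b : R}
    (h : a * b = 1) : b * a = 1 := by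
  have hidem : (b * a) * (b * a) = b * a := by rw [mul_assoc, ← mul_assoc a, h, one_mul]
  rcases IsLocalRing.isUnit_or_isUnit_of_add_one (sub_add_cancel 1 (b * a)) with hu | hu
  · have : a * (1 - b * a) = 0 := by rw [mul_sub, mul_one, ← mul_assoc, h, one_mul, sub_self]
    rw [hu.mul_left_eq_zero] at this
    simp [this] at h
  · exact hu.mul_left_cancel (hidem.trans (mul_one _).symm)

theorem isUnit_or_isNilpotent_of_finiteDimensional (k : Type*) {R : Type*} [Field k] [Ring R]
    [Algebra k R] [FiniteDimensional k R] (hR : ∀ e : R, IsIdempotentElem e → e = 0 ∨ e = 1)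
    (a : R) : IsUnit a ∨ IsNilpotent a := by
  obtain ⟨n, hcompl, hn⟩ := ((LinearMap.mulLeft k a).eventually_isCompl_ker_pow_range_pow.and
    (Filter.eventually_ge_atTop 1)).exists
  rw [LinearMap.pow_mulLeft] at hcompl
  obtain ⟨y, hy, e, ⟨w, he⟩, hye⟩ := Submodule.mem_sup.mp
    (hcompl.codisjoint.eq_top ▸ Submodule.mem_top : (1 : R) ∈ _ ⊔ _)
  simp only [LinearMap.mem_ker, LinearMap.mulLeft_apply] at hy he
  -- `R = ker ⊕ range` is a decomposition into right ideals, so the range part `e` of `1` is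
  -- idempotent
  have hidem : IsIdempotentElem e := by
    have hsplit : y * e + e * e = e := by rw [← add_mul, hye, one_mul]
    have hsub : e * e - e = -(y * e) :=
      calc _ = e * e - (y * e + e * e) := by rw [hsplit]
        _ = _ := by abel
    refine sub_eq_zero.mp (Submodule.disjoint_def.mp hcompl.disjoint _ ?_ ?_)
    · rw [LinearMap.mem_ker, LinearMap.mulLeft_apply, hsub, mul_neg, ← mul_assoc, hy, zero_mul,
        neg_zero]
    · exact ⟨w * e - w, by rw [LinearMap.mulLeft_apply, mul_sub, ← mul_assoc, he]⟩
  rcases hR e hidem with rfl | rfl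
  · right
    refine ⟨n, ?_⟩
    rw [← mul_one (a ^ n), ← hye, add_zero, hy]
  · left
    have := IsArtinianRing.of_finite k R
    exact (isUnit_pow_iff (by omega)).mp (IsUnit.of_mul_eq_one _ he)

theorem IsLocalRing.of_finiteDimensional (k : Type*) {R : Type*} [Field k] [Ring R]
    [Algebra k R] [FiniteDimensional k R] [Nontrivial R]
    (hR : ∀ e : R, IsIdempotentElem e → e = 0 ∨ e = 1) : IsLocalRing R :=
  .of_isUnit_or_isUnit_one_sub_self fun a =>
    (isUnit_or_isNilpotent_of_finiteDimensional k hR a).imp_right IsNilpotent.isUnit_one_sub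

namespace CategoryTheory

section Preadditive

variable {C : Type*} [Category C] [Preadditive C]

theorem isIso_or_isIso_of_add_eq_id {A : C} [IsLocalRing (End A)] {a b : A ⟶ A}
    (h : a + b = 𝟙 A) : IsIso a ∨ IsIso b := by
  simpa only [← isUnit_iff_isIso] using
    IsLocalRing.isUnit_or_isUnit_of_add_one (R := End A) h

theorem exists_isIso_of_sum_eq_id {A : C} [IsLocalRing (End A)] {ι : Type*} {s : Finset ι}
    {a : ι → (A ⟶ A)} (h : ∑ j ∈ s, a j = 𝟙 A) : ∃ j ∈ s, IsIso (a j) := by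
  simpa only [← isUnit_iff_isIso] using
    IsLocalRing.exists_of_isUnit_sum (R := End A) (f := a) (by rw [h]; exact isUnit_one)

theorem isIso_of_comp_eq_id {A : C} [IsLocalRing (End A)] {f g : A ⟶ A}
    (h : f ≫ g = 𝟙 A) : IsIso f :=
  ⟨g, h, IsLocalRing.mul_eq_one_symm (R := End A) h⟩

theorem isIso_add_id_of_not_isIso {A : C} [IsLocalRing (End A)] {a : A ⟶ A} (ha : ¬IsIso a) :
    IsIso (a + 𝟙 A) := by
  rw [← isUnit_iff_isIso] at ha ⊢
  refine (IsLocalRing.isUnit_or_isUnit_of_add_one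
    (neg_add_cancel_left a (1 : End A))).resolve_left ?_
  rwa [IsUnit.neg_iff]

noncomputable def Retract.ofIsIso {A X : C} (f : A ⟶ X) (g : X ⟶ A) [IsIso (f ≫ g)] :
    Retract A X where
  i := f
  r := g ≫ inv (f ≫ g)
  retract := by rw [← Category.assoc, IsIso.hom_inv_id]

theorem Retract.isZero {A X : C} (h : Retract A X) (hX : IsZero X) : IsZero A := by
  rw [IsZero.iff_id_eq_zero, ← h.retract, hX.eq_of_src h.r 0, Limits.comp_zero]

theorem isZero_biproduct {ι : Type} [Fintype ι] {f : ι → C} [HasBiproduct f]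
    (hf : ∀ j, IsZero (f j)) : IsZero (⨁ f) := by
  rw [IsZero.iff_id_eq_zero, ← biproduct.total]
  exact Finset.sum_eq_zero fun j _ => by rw [(hf j).eq_of_src (biproduct.ι f j) 0, comp_zero]

theorem Retract.exists_complement [IsIdempotentComplete C] {A X : C} (h : Retract A X) :
    ∃ (D : C) (h' : Retract D X), h.r ≫ h.i + h'.r ≫ h'.i = 𝟙 X := by
  have hidem : (𝟙 X - h.r ≫ h.i) ≫ (𝟙 X - h.r ≫ h.i) = 𝟙 X - h.r ≫ h.i := by
    simp [Preadditive.sub_comp, Preadditive.comp_sub]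
  obtain ⟨D, i, r, hir, hri⟩ := IsIdempotentComplete.idempotents_split X _ hidem
  exact ⟨D, ⟨i, r, hir⟩, by simp [hri]⟩

theorem Retract.exists_retract_biproduct {ι : Type} [Fintype ι] {f : ι → C} [HasBiproduct f]
    {A : C} [IsLocalRing (End A)] (h : Retract A (⨁ f)) : ∃ j, Nonempty (Retract A (f j)) := by
  have htotal : ∑ j, (h.i ≫ biproduct.π f j) ≫ (biproduct.ι f j ≫ h.r) = 𝟙 A := by
    have := h.i ≫= biproduct.total =≫ h.r
    simpa only [Preadditive.sum_comp, Preadditive.comp_sum, Category.assoc, Category.id_comp,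
      h.retract] using this
  obtain ⟨j, -, hj⟩ := exists_isIso_of_sum_eq_id htotal
  exact ⟨j, ⟨Retract.ofIsIso (h.i ≫ biproduct.π f j) (biproduct.ι f j ≫ h.r)⟩⟩

variable [HasBinaryBiproducts C]

noncomputable def Retract.isoBiprod {A D X : C} (h : Retract A X) (h' : Retract D X)
    (total : h.r ≫ h.i + h'.r ≫ h'.i = 𝟙 X) : X ≅ A ⊞ D where
  hom := biprod.lift h.r h'.r
  inv := biprod.desc h.i h'.i
  hom_inv_id := by simpa using total
  inv_hom_id := by
    have h₁ : h.i ≫ h'.r = 0 := by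
      have := h.i ≫= total
      simp only [Preadditive.comp_add, h.retract_assoc, Category.comp_id, add_eq_left] at this
      simpa using this =≫ h'.r
    have h₂ : h'.i ≫ h.r = 0 := by
      have := h'.i ≫= total
      simp only [Preadditive.comp_add, h'.retract_assoc, Category.comp_id, add_eq_right] at this
      simpa using this =≫ h.r
    ext <;> simp [h₁, h₂]

theorem biprod_cancel_left_of_isLocalRing {A B B' : C} [IsLocalRing (End A)]
    (f : A ⊞ B ≅ A ⊞ B') : Nonempty (B ≅ B') := by
  set x := biprod.inl ≫ f.hom ≫ biprod.fst
  set s := biprod.inl ≫ f.hom ≫ biprod.snd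
  by_cases hx : IsIso x
  · exact ⟨Biprod.isoElim f⟩
  have htotal :
      x ≫ (biprod.inl ≫ f.inv ≫ biprod.fst) + s ≫ (biprod.inr ≫ f.inv ≫ biprod.fst) = 𝟙 A := by
    have := biprod.inl ≫= (f.hom ≫= biprod.total =≫ (f.inv ≫ biprod.fst))
    simpa only [x, s, Preadditive.add_comp, Preadditive.comp_add, Category.assoc, Category.id_comp,
      Iso.hom_inv_id_assoc, biprod.inl_fst] using this
  obtain ⟨r, hsr⟩ : ∃ r : B' ⟶ A, s ≫ r = 𝟙 A := by
    rcases isIso_or_isIso_of_add_eq_id htotal with h | h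
    · exact absurd (isIso_of_comp_eq_id
        (Retract.ofIsIso x (biprod.inl ≫ f.inv ≫ biprod.fst)).retract) hx
    · exact ⟨_, (Retract.ofIsIso s (biprod.inr ≫ f.inv ≫ biprod.fst)).retract⟩
  -- the shear by `r` turns the corner `x` of `f` into `x + 𝟙 A`, which is invertible
  have : IsIso (biprod.inl ≫ (f ≪≫ Biprod.unipotentLower r).hom ≫ biprod.fst) := by
    convert isIso_add_id_of_not_isIso hx using 1
    simpa [Biprod.unipotentLower, Biprod.ofComponents_fst, x, s] using hsr
  exact ⟨Biprod.isoElim (f ≪≫ Biprod.unipotentLower r)⟩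

noncomputable def biproductBiprodIso [HasFiniteBiproducts C] {ι : Type} [Finite ι]
    (f g : ι → C) : (⨁ fun j => f j ⊞ g j) ≅ (⨁ f) ⊞ (⨁ g) where
  hom := biprod.lift (biproduct.map fun _ => biprod.fst) (biproduct.map fun _ => biprod.snd)
  inv := biprod.desc (biproduct.map fun _ => biprod.inl) (biproduct.map fun _ => biprod.inr)
  hom_inv_id := by
    apply biproduct.hom_ext'
    intro j
    simp only [biprod.lift_desc, Preadditive.comp_add, biproduct.ι_map_assoc, biproduct.ι_map,
      Category.comp_id]
    rw [← Category.assoc, ← Category.assoc biprod.snd, ← Preadditive.add_comp, biprod.total,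
      Category.id_comp]
  inv_hom_id := by
    apply biprod.hom_ext' <;> apply biproduct.hom_ext' <;> intro j <;> apply biprod.hom_ext <;>
      simp

end Preadditive

section Linear

variable (k : Type*) [Field k] {C : Type*} [Category C] [Preadditive C] [Linear k C]
  [∀ X Y : C, FiniteDimensional k (X ⟶ Y)]

instance (X : C) : FiniteDimensional k (End X) :=
  inferInstanceAs (FiniteDimensional k (X ⟶ X))

theorem finrank_lt_of_retract {A X : C} (h : Retract A X) (hne : h.r ≫ h.i ≠ 𝟙 X) :
    Module.finrank k (A ⟶ A) < Module.finrank k (X ⟶ X) := by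
  let Φ : (A ⟶ A) →ₗ[k] (X ⟶ X) := Linear.leftComp k X h.r ∘ₗ Linear.rightComp k A h.i
  have hinj : Function.Injective Φ := fun f g hfg => by
    simpa [Φ] using h.i ≫= hfg =≫ h.r
  have hrange : LinearMap.range Φ ≠ ⊤ := fun htop => hne <| by
    obtain ⟨f, hf⟩ : 𝟙 X ∈ LinearMap.range Φ := htop ▸ Submodule.mem_top
    simp only [Φ, LinearMap.comp_apply, Linear.leftComp_apply, Linear.rightComp_apply] at hf
    have := h.r ≫= h.i ≫= hf
    simp only [h.retract_assoc, Category.comp_id] at this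
    rw [← this, hf]
  rw [← LinearMap.finrank_range_of_inj hinj]
  exact Submodule.finrank_lt hrange

include k

theorem isLocalRing_end {X : C} (hX : ¬IsZero X)
    (hidem : ∀ e : X ⟶ X, e ≫ e = e → e = 0 ∨ e = 𝟙 X) : IsLocalRing (End X) :=
  have : Nontrivial (End X) := ⟨𝟙 X, 0, by rwa [IsZero.iff_id_eq_zero] at hX⟩
  .of_finiteDimensional k hidem

theorem exists_isLocalRing_retract [IsIdempotentComplete C] (X : C) (hX : ¬IsZero X) :
    ∃ A : C, IsLocalRing (End A) ∧ Nonempty (Retract A X) := by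
  induction hn : Module.finrank k (X ⟶ X) using Nat.strong_induction_on generalizing X with
  | _ n ih =>
  by_cases hidem : ∀ e : X ⟶ X, e ≫ e = e → e = 0 ∨ e = 𝟙 X
  · exact ⟨X, isLocalRing_end k hX hidem, ⟨Retract.refl X⟩⟩
  push Not at hidem
  obtain ⟨e, he, he0, he1⟩ := hidem
  obtain ⟨Y, i, r, hir, hri⟩ := IsIdempotentComplete.idempotents_split X e he
  let h : Retract Y X := ⟨i, r, hir⟩
  have hY : ¬IsZero Y := fun hY => he0 (by rw [← hri, hY.eq_of_src i 0, comp_zero])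
  obtain ⟨A, hA, ⟨h'⟩⟩ := ih _ (hn ▸ finrank_lt_of_retract k h (hri ▸ he1)) Y hY rfl
  exact ⟨A, hA, ⟨h'.trans h⟩⟩

theorem induction_on_isLocalRing_summand [IsIdempotentComplete C] [HasBinaryBiproducts C]
    {P : C → Prop} (of_iso : ∀ {X Y : C}, (X ≅ Y) → P X → P Y) (zero : ∀ X : C, IsZero X → P X)
    (biprod : ∀ A D : C, IsLocalRing (End A) → P D → P (A ⊞ D)) (X : C) : P X := by
  induction hn : Module.finrank k (X ⟶ X) using Nat.strong_induction_on generalizing X with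
  | _ n ih =>
  by_cases hX : IsZero X
  · exact zero X hX
  obtain ⟨A, hA, ⟨h⟩⟩ := exists_isLocalRing_retract k X hX
  obtain ⟨D, h', htotal⟩ := h.exists_complement
  have hne : h'.r ≫ h'.i ≠ 𝟙 X := fun h1 => by
    rw [h1, add_eq_right] at htotal
    exact one_ne_zero (α := End A) (by simpa using h.i ≫= htotal =≫ h.r)
  exact of_iso (h.isoBiprod h' htotal).symm
    (biprod A D hA (ih _ (hn ▸ finrank_lt_of_retract k h' hne) D rfl))

theorem biprod_cancel_left [IsIdempotentComplete C] [HasBinaryBiproducts C] (A : C) {B B' : C}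
    (f : A ⊞ B ≅ A ⊞ B') : Nonempty (B ≅ B') := by
  refine induction_on_isLocalRing_summand k
    (P := fun A => ∀ {B B' : C}, (A ⊞ B ≅ A ⊞ B') → Nonempty (B ≅ B')) ?_ ?_ ?_ A f
  · intro X Y e hX B B' f
    exact hX (biprod.mapIso e (Iso.refl B) ≪≫ f ≪≫ biprod.mapIso e.symm (Iso.refl B'))
  · intro X hX B B' f
    have := hX.isIso hX (biprod.inl ≫ f.hom ≫ biprod.fst)
    exact ⟨Biprod.isoElim f⟩
  · intro A D _ hD B B' f
    obtain ⟨g⟩ := biprod_cancel_left_of_isLocalRing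
      ((biprod.associator A D B).symm ≪≫ f ≪≫ biprod.associator A D B')
    exact hD g

theorem biproduct_const_cancel [IsIdempotentComplete C] [HasFiniteBiproducts C]
    [HasBinaryBiproducts C] {ι : Type} [Finite ι] [Nonempty ι] (B : C) {B' : C}
    (f : (⨁ fun _ : ι => B) ≅ ⨁ fun _ : ι => B') : Nonempty (B ≅ B') := by
  have := Fintype.ofFinite ι
  obtain ⟨j⟩ := ‹Nonempty ι›
  refine induction_on_isLocalRing_summand k
    (P := fun B => ∀ {B'}, ((⨁ fun _ : ι => B) ≅ ⨁ fun _ : ι => B') → Nonempty (B ≅ B'))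
    ?_ ?_ ?_ B f
  · intro X Y e hX B' f
    obtain ⟨g⟩ := hX ((biproduct.mapIso fun _ => e) ≪≫ f)
    exact ⟨e.symm ≪≫ g⟩
  · intro X hX B' f
    let h : Retract B' (⨁ fun _ : ι => X) :=
      (⟨biproduct.ι (fun _ : ι => B') j, biproduct.π _ j, by simp⟩ : Retract B' _).trans
        (.ofIso f.symm)
    exact ⟨hX.iso (h.isZero (isZero_biproduct fun _ => hX))⟩
  · intro A D hA hD B' f
    let hAB' : Retract A (⨁ fun _ : ι => B') :=
      (⟨biprod.inl ≫ biproduct.ι (fun _ : ι => A ⊞ D) j, biproduct.π _ j ≫ biprod.fst, by simp⟩ :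
        Retract A (⨁ fun _ : ι => A ⊞ D)).trans (.ofIso f)
    obtain ⟨-, ⟨h⟩⟩ := hAB'.exists_retract_biproduct
    obtain ⟨E, h', htotal⟩ := h.exists_complement
    let e := h.isoBiprod h' htotal
    obtain ⟨g⟩ := biprod_cancel_left k (⨁ fun _ : ι => A) ((biproductBiprodIso _ _).symm ≪≫ f ≪≫
      biproduct.mapIso (fun _ => e) ≪≫ biproductBiprodIso _ _)
    obtain ⟨g'⟩ := hD g
    exact ⟨biprod.mapIso (Iso.refl A) g' ≪≫ e.symm⟩

end Linear

end CategoryTheory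

theorem krull_schmidt_cancellation
    {k : Type*} [Field k] {C : Type*} [Category C] [Preadditive C] [Linear k C]
    [HasFiniteBiproducts C] [HasBinaryBiproducts C]
    [IsIdempotentComplete C]
    [∀ X Y : C, FiniteDimensional k (X ⟶ Y)]
    (A B C' : C) :
    (Nonempty (A ⊞ B ≅ A ⊞ C') → Nonempty (B ≅ C')) ∧
    (∀ n : ℕ, 1 ≤ n →
      Nonempty ((⨁ fun _ : Fin n => B) ≅ ⨁ fun _ : Fin n => C') → Nonempty (B ≅ C')) := by
  refine ⟨fun ⟨f⟩ => biprod_cancel_left k A f, fun n hn ⟨f⟩ => ?_⟩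
  have : Nonempty (Fin n) := ⟨⟨0, hn⟩⟩
  exact biproduct_const_cancel k B f
end

section
/- Let ℓ = n(n−1)/2 and let c_1, …, c_ℓ ∈ {0, …, n−2} be indices such that the product s_{c_1} s_{c_2} ⋯ s_{c_ℓ} of the corresponding adjacent transpositions equals the longest element w_0 of the symmetric group on {0, …, n−1} (the order-reversing permutation); since the length of w_0 is n(n−1)/2, such an expression is automatically reduced. Set ∂_{w_0} := ∂_{c_1} ∘ ∂_{c_2} ∘ ⋯ ∘ ∂_{c_ℓ}. If f ∈ R[x_0, …, x_{n−1}] is symmetric in x_i and x_{i+1} for some 0 ≤ i ≤ n−2, then ∂_{w_0}( f · ∂_{w_0}(g) ) = 0 for every polynomial g. -/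
/-!
The operators `∂_c` satisfy the nil-Coxeter relations: `∂_c ∂_c = 0`, `∂_c ∂_d = ∂_d ∂_c` when
`|c - d| ≥ 2`, and the braid relations. Each follows from the defining identity
`(x_c - x_{c+1}) ∂_c g = g - s_c g` after multiplying through by products of roots, which are
non-zero-divisors. An exchange argument on reduced words, with the length of a permutation counted
by its inversions, then shows that the product of the `∂_c` along any non-reduced word vanishes.

No permutation of `n` letters has more than `ℓ = n(n-1)/2` inversions, so the words `i :: L` and
`L ++ [i]` are not reduced: `∂_i ∂_{w₀} = 0` and `∂_{w₀} ∂_i = 0`. The first says that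
`∂_{w₀} g`, hence `q = f ∂_{w₀} g`, is `s_i`-invariant; then `q = ∂_i (x_i q)`, so the second gives
`∂_{w₀} q = 0`.
-/

open Finset MvPolynomial

namespace Equiv.Perm

variable {n : ℕ}

abbrev simpleSwap (c : Fin n) : Perm (Fin (n + 1)) := swap c.castSucc c.succ

def wordProd (M : List (Fin n)) : Perm (Fin (n + 1)) := (M.map simpleSwap).prod

-- Inversions are recorded as pairs of values, so that left multiplication by `simpleSwap c`
-- acts on them by relabelling.
def inversions {m : ℕ} (w : Perm (Fin m)) : Finset (Fin m × Fin m) :=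
  {p | p.1 < p.2 ∧ w⁻¹ p.2 < w⁻¹ p.1}

def invCount {m : ℕ} (w : Perm (Fin m)) : ℕ := #(inversions w)

def IsLeftDescent (c : Fin n) (w : Perm (Fin (n + 1))) : Prop := w⁻¹ c.succ < w⁻¹ c.castSucc

@[simp] lemma wordProd_nil : wordProd ([] : List (Fin n)) = 1 := rfl

@[simp] lemma wordProd_cons (c : Fin n) (M : List (Fin n)) :
    wordProd (c :: M) = simpleSwap c * wordProd M := List.prod_cons

lemma simpleSwap_mul_self (c : Fin n) : simpleSwap c * simpleSwap c = 1 := swap_mul_self _ _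

lemma val_simpleSwap (c : Fin n) (u : Fin (n + 1)) :
    (simpleSwap c u : ℕ) =
      if (u : ℕ) = c then (c : ℕ) + 1 else if (u : ℕ) = c + 1 then (c : ℕ) else (u : ℕ) := by
  rw [simpleSwap, swap_apply_def]
  split_ifs <;> simp only [Fin.ext_iff, Fin.val_castSucc, Fin.val_succ] at * <;> omega

lemma simpleSwap_lt_simpleSwap {c : Fin n} {u v : Fin (n + 1)} (h : u < v)
    (hne : (u, v) ≠ (c.castSucc, c.succ)) : simpleSwap c u < simpleSwap c v := by
  have hu := val_simpleSwap c u
  have hv := val_simpleSwap c v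
  simp only [ne_eq, Prod.mk.injEq, Fin.ext_iff, Fin.val_castSucc, Fin.val_succ] at hne
  rw [Fin.lt_def] at h ⊢
  split_ifs at hu hv <;> omega

lemma isLeftDescent_simpleSwap_mul_iff {c : Fin n} {w : Perm (Fin (n + 1))} :
    IsLeftDescent c (simpleSwap c * w) ↔ ¬ IsLeftDescent c w := by
  have hne : w⁻¹ c.castSucc ≠ w⁻¹ c.succ := by simp [Fin.castSucc_lt_succ.ne]
  simp only [IsLeftDescent, mul_inv_rev, swap_inv, coe_mul, Function.comp_apply,
    swap_apply_left, swap_apply_right, not_lt]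
  exact ⟨le_of_lt, fun h => lt_of_le_of_ne h hne⟩

lemma mem_inversions_simpleSwap_mul_iff {c : Fin n} {w : Perm (Fin (n + 1))}
    (hw : ¬ IsLeftDescent c w) {u v : Fin (n + 1)} :
    (u, v) ∈ inversions (simpleSwap c * w) ↔
      (u, v) = (c.castSucc, c.succ) ∨ (simpleSwap c u, simpleSwap c v) ∈ inversions w := by
  have hsw : IsLeftDescent c (simpleSwap c * w) := isLeftDescent_simpleSwap_mul_iff.mpr hw
  simp only [inversions, mem_filter, mem_univ, true_and, mul_inv_rev, coe_mul,
    Function.comp_apply, swap_inv]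
  constructor
  · rintro ⟨huv, hinv⟩
    by_cases hq : (u, v) = (c.castSucc, c.succ)
    · exact Or.inl hq
    · exact Or.inr ⟨simpleSwap_lt_simpleSwap huv hq, hinv⟩
  · rintro (hq | ⟨hlt, hinv⟩)
    · obtain ⟨rfl, rfl⟩ := Prod.mk.inj hq
      exact ⟨Fin.castSucc_lt_succ, hsw⟩
    · by_cases hq : (simpleSwap c u, simpleSwap c v) = (c.castSucc, c.succ)
      · obtain ⟨hu, hv⟩ := Prod.mk.inj hq
        rw [hu, hv] at hinv
        exact absurd hinv hw
      · exact ⟨by simpa using simpleSwap_lt_simpleSwap hlt hq, hinv⟩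

lemma invCount_simpleSwap_mul_of_not_isLeftDescent {c : Fin n} {w : Perm (Fin (n + 1))}
    (hw : ¬ IsLeftDescent c w) : invCount (simpleSwap c * w) = invCount w + 1 := by
  let e := prodCongr (simpleSwap c) (simpleSwap c)
  have hinv : inversions (simpleSwap c * w) =
      insert (c.castSucc, c.succ) ((inversions w).map e.toEmbedding) := by
    ext ⟨u, v⟩
    simpa [mem_map_equiv, e] using mem_inversions_simpleSwap_mul_iff hw
  have hnot : (c.castSucc, c.succ) ∉ (inversions w).map e.toEmbedding := by
    simp [e, inversions, mem_map_equiv, Fin.castSucc_lt_succ.not_gt]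
  rw [invCount, hinv, card_insert_of_notMem hnot, card_map, invCount]

lemma invCount_simpleSwap_mul_of_isLeftDescent {c : Fin n} {w : Perm (Fin (n + 1))}
    (hw : IsLeftDescent c w) : invCount w = invCount (simpleSwap c * w) + 1 := by
  have h := invCount_simpleSwap_mul_of_not_isLeftDescent
    (fun h' => isLeftDescent_simpleSwap_mul_iff.mp h' hw)
  rwa [← mul_assoc, simpleSwap_mul_self, one_mul] at h

lemma invCount_simpleSwap_mul_le (c : Fin n) (w : Perm (Fin (n + 1))) :
    invCount (simpleSwap c * w) ≤ invCount w + 1 := by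
  by_cases hw : IsLeftDescent c w
  · have := invCount_simpleSwap_mul_of_isLeftDescent hw
    omega
  · rw [invCount_simpleSwap_mul_of_not_isLeftDescent hw]

lemma invCount_wordProd_le (M : List (Fin n)) : invCount (wordProd M) ≤ M.length := by
  induction M with
  | nil => simpa [invCount, inversions] using fun _ _ => le_of_lt
  | cons c M ih =>
    rw [wordProd_cons, List.length_cons]
    exact (invCount_simpleSwap_mul_le c _).trans (by omega)

lemma isLeftDescent_of_invCount_simpleSwap_mul_lt {c : Fin n} {w : Perm (Fin (n + 1))}
    (h : invCount (simpleSwap c * w) < invCount w + 1) : IsLeftDescent c w := by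
  by_contra hw
  rw [invCount_simpleSwap_mul_of_not_isLeftDescent hw] at h
  exact lt_irrefl _ h

lemma invCount_le_choose_two {m : ℕ} (w : Perm (Fin m)) : invCount w ≤ m.choose 2 := by
  calc invCount w ≤ #{p ∈ (univ : Finset (Fin m)) ×ˢ univ | p.1 < p.2} :=
        card_le_card fun p hp => by simp_all [inversions]
    _ = m.choose 2 := by rw [card_product_filter_lt, card_univ, Fintype.card_fin]

lemma simpleSwap_apply_of_ne {c : Fin n} {u : Fin (n + 1)} (h : (u : ℕ) ≠ c ∧ (u : ℕ) ≠ c + 1) :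
    simpleSwap c u = u :=
  swap_apply_of_ne_of_ne (by simpa [Fin.ext_iff] using h.1) (by simpa [Fin.ext_iff] using h.2)

lemma simpleSwap_mul_comm_of_far {c d : Fin n} (hfar : (c : ℕ) + 1 < d ∨ (d : ℕ) + 1 < c) :
    simpleSwap c * simpleSwap d = simpleSwap d * simpleSwap c := by
  ext u
  simp only [coe_mul, Function.comp_apply, val_simpleSwap]
  split_ifs <;> omega

lemma simpleSwap_braid {c d : Fin n} (hadj : (c : ℕ) + 1 = d) :
    simpleSwap c * simpleSwap d * simpleSwap c = simpleSwap d * simpleSwap c * simpleSwap d := by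
  have hcd : d.castSucc = c.succ := Fin.ext (by simp [← hadj])
  have hxy : c.castSucc ≠ c.succ := Fin.castSucc_lt_succ.ne
  have hxz : c.castSucc ≠ d.succ := by simp [Fin.ext_iff]; omega
  have hyz : c.succ ≠ d.succ := by simp [Fin.ext_iff]; omega
  simp only [simpleSwap, hcd]
  rw [swap_mul_swap_mul_swap hxy hxz, swap_comm c.castSucc c.succ, swap_comm c.succ d.succ,
    swap_mul_swap_mul_swap hyz.symm hxz.symm, swap_comm]

lemma IsLeftDescent.simpleSwap_mul_of_far {c d : Fin n} (hfar : (c : ℕ) + 1 < d ∨ (d : ℕ) + 1 < c)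
    {w : Perm (Fin (n + 1))} (hc : IsLeftDescent c w) : IsLeftDescent c (simpleSwap d * w) := by
  have h₁ : simpleSwap d c.castSucc = c.castSucc := simpleSwap_apply_of_ne (by simp; omega)
  have h₂ : simpleSwap d c.succ = c.succ := simpleSwap_apply_of_ne (by simp; omega)
  simpa [IsLeftDescent, h₁, h₂] using hc

lemma IsLeftDescent.simpleSwap_mul_of_adjacent {c d : Fin n}
    (hadj : (c : ℕ) + 1 = d ∨ (d : ℕ) + 1 = c) {w : Perm (Fin (n + 1))}
    (hc : IsLeftDescent c w) (hd : IsLeftDescent d w) :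
    IsLeftDescent c (simpleSwap d * w) ∧ IsLeftDescent d (simpleSwap c * (simpleSwap d * w)) := by
  simp only [IsLeftDescent, mul_inv_rev, swap_inv, coe_mul, Function.comp_apply] at hc hd ⊢
  rcases hadj with h | h
  · have hcd : d.castSucc = c.succ := Fin.ext (by simp [← h])
    have hxy : c.castSucc ≠ c.succ := Fin.castSucc_lt_succ.ne
    have hxz : c.castSucc ≠ d.succ := by simp [Fin.ext_iff]; omega
    have hyz : c.succ ≠ d.succ := by simp [Fin.ext_iff]; omega
    simp only [hcd, swap_apply_def, hxy, hxz, hyz, hxy.symm, hxz.symm, hyz.symm, if_true,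
      if_false] at hc hd ⊢
    exact ⟨hd.trans hc, hc⟩
  · have hcd : c.castSucc = d.succ := Fin.ext (by simp [← h])
    have hxy : d.castSucc ≠ d.succ := Fin.castSucc_lt_succ.ne
    have hxz : d.castSucc ≠ c.succ := by simp [Fin.ext_iff]; omega
    have hyz : d.succ ≠ c.succ := by simp [Fin.ext_iff]; omega
    simp only [hcd, swap_apply_def, hxy, hxz, hyz, hxy.symm, hxz.symm, hyz.symm, if_true,
      if_false] at hc hd ⊢
    exact ⟨hc.trans hd, hc⟩

def IsReducedWord (M : List (Fin n)) : Prop := invCount (wordProd M) = M.length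

lemma isReducedWord_nil : IsReducedWord ([] : List (Fin n)) :=
  Nat.le_zero.mp (invCount_wordProd_le [])

lemma IsReducedWord.of_cons {d : Fin n} {M : List (Fin n)} (h : IsReducedWord (d :: M)) :
    IsReducedWord M := by
  have := invCount_wordProd_le M
  have := invCount_simpleSwap_mul_le d (wordProd M)
  rw [IsReducedWord, wordProd_cons, List.length_cons] at h
  rw [IsReducedWord]
  omega

lemma IsReducedWord.isLeftDescent_head {d : Fin n} {M : List (Fin n)}
    (h : IsReducedWord (d :: M)) : IsLeftDescent d (wordProd (d :: M)) := by
  have := h.of_cons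
  rw [IsReducedWord, wordProd_cons, List.length_cons] at h
  rw [IsReducedWord] at this
  apply isLeftDescent_of_invCount_simpleSwap_mul_lt
  rw [wordProd_cons, ← mul_assoc, simpleSwap_mul_self, one_mul]
  omega

lemma IsReducedWord.isLeftDescent_of_not_cons {c : Fin n} {M : List (Fin n)}
    (hM : IsReducedWord M) (h : ¬ IsReducedWord (c :: M)) : IsLeftDescent c (wordProd M) := by
  have := invCount_simpleSwap_mul_le c (wordProd M)
  rw [IsReducedWord, wordProd_cons, List.length_cons] at h
  rw [IsReducedWord] at hM
  exact isLeftDescent_of_invCount_simpleSwap_mul_lt (by omega)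

lemma IsReducedWord.of_wordProd_eq_simpleSwap_mul {c : Fin n} {M Z : List (Fin n)}
    (hM : IsReducedWord M) (hc : IsLeftDescent c (wordProd M))
    (hZ : wordProd Z = simpleSwap c * wordProd M) (hlen : Z.length + 1 = M.length) :
    IsReducedWord Z := by
  have := invCount_simpleSwap_mul_of_isLeftDescent hc
  rw [IsReducedWord] at hM ⊢
  rw [hZ]
  omega

lemma not_isReducedWord_of_choose_two_lt {M : List (Fin n)} (h : (n + 1).choose 2 < M.length) :
    ¬ IsReducedWord M :=
  fun hM => (invCount_le_choose_two (wordProd M)).not_gt (hM ▸ h)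

end Equiv.Perm

section NilCoxeter

open Equiv.Perm

variable {M₀ : Type*} [MonoidWithZero M₀] {n : ℕ} {T : Fin n → M₀}

-- `c` and the first letter `d` of `M` are both left descents. By induction the tail of `M` can
-- be taken to start with `c` (if `|c - d| ≥ 2`) or with `c d` (if `|c - d| = 1`), and a
-- commutation or braid relation then brings `c` to the front.
theorem exists_prod_map_eq_mul_of_isLeftDescent
    (hcomm : ∀ c d : Fin n, (c : ℕ) + 1 < d → T c * T d = T d * T c)
    (hbraid : ∀ c d : Fin n, (c : ℕ) + 1 = d → T c * T d * T c = T d * T c * T d)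
    (M : List (Fin n)) (hM : IsReducedWord M) {c : Fin n}
    (hc : IsLeftDescent c (wordProd M)) :
    ∃ M' : List (Fin n), M'.length + 1 = M.length ∧
      wordProd M' = simpleSwap c * wordProd M ∧ (M.map T).prod = T c * (M'.map T).prod := by
  induction hk : M.length using Nat.strong_induction_on generalizing M c with
  | _ k ih =>
    rcases M with _ | ⟨d, M₁⟩
    · exact absurd hc (not_lt.mpr Fin.castSucc_lt_succ.le)
    have hM₁ := hM.of_cons
    have hd := hM.isLeftDescent_head
    have hw₁ : simpleSwap d * wordProd (d :: M₁) = wordProd M₁ := by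
      rw [wordProd_cons, ← mul_assoc, simpleSwap_mul_self, one_mul]
    obtain rfl : M₁.length + 1 = k := hk
    simp only [List.map_cons, List.prod_cons]
    by_cases hcd : c = d
    · subst hcd
      exact ⟨M₁, rfl, hw₁.symm, rfl⟩
    by_cases hadj : (c : ℕ) + 1 = d ∨ (d : ℕ) + 1 = c
    · obtain ⟨hc₁, hd₂⟩ := hc.simpleSwap_mul_of_adjacent hadj hd
      rw [hw₁] at hc₁ hd₂
      obtain ⟨Z₁, hZ₁len, hZ₁prod, hZ₁⟩ := ih M₁.length (by omega) M₁ hM₁ hc₁ rfl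
      have hZ₁red := hM₁.of_wordProd_eq_simpleSwap_mul hc₁ hZ₁prod hZ₁len
      rw [← hZ₁prod] at hd₂
      obtain ⟨Z₂, hZ₂len, hZ₂prod, hZ₂⟩ := ih Z₁.length (by omega) Z₁ hZ₁red hd₂ rfl
      refine ⟨d :: c :: Z₂, by simp; omega, ?_, ?_⟩
      · have hbr := hadj.elim simpleSwap_braid fun h => (simpleSwap_braid h).symm
        simp only [wordProd_cons, hZ₂prod, hZ₁prod, ← mul_assoc]
        rw [← hbr, mul_assoc (simpleSwap c * simpleSwap d), simpleSwap_mul_self, mul_one]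
      · have hbr := hadj.elim (hbraid c d) fun h => (hbraid d c h).symm
        simp only [List.map_cons, List.prod_cons, hZ₁, hZ₂, ← mul_assoc, hbr]
    · have hfar : (c : ℕ) + 1 < d ∨ (d : ℕ) + 1 < c := by
        have := Fin.val_ne_of_ne hcd; omega
      have hc₁ := hc.simpleSwap_mul_of_far hfar
      rw [hw₁] at hc₁
      obtain ⟨M', hlen, hprod, hM'⟩ := ih M₁.length (by omega) M₁ hM₁ hc₁ rfl
      refine ⟨d :: M', by simp [hlen], ?_, ?_⟩
      · rw [wordProd_cons, hprod, wordProd_cons, ← mul_assoc, ← mul_assoc,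
          simpleSwap_mul_comm_of_far hfar]
      · rw [hM', List.map_cons, List.prod_cons, ← mul_assoc, ← mul_assoc,
          hfar.elim (hcomm c d) fun h => (hcomm d c h).symm]

theorem prod_map_eq_zero_of_not_isReducedWord (hsq : ∀ c, T c * T c = 0)
    (hcomm : ∀ c d : Fin n, (c : ℕ) + 1 < d → T c * T d = T d * T c)
    (hbraid : ∀ c d : Fin n, (c : ℕ) + 1 = d → T c * T d * T c = T d * T c * T d)
    (M : List (Fin n)) (hM : ¬ IsReducedWord M) : (M.map T).prod = 0 := by
  induction M with
  | nil => exact absurd isReducedWord_nil hM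
  | cons c M ih =>
    rw [List.map_cons, List.prod_cons]
    by_cases hred : IsReducedWord M
    · obtain ⟨M', -, -, hM'⟩ := exists_prod_map_eq_mul_of_isLeftDescent hcomm hbraid M hred
        (hred.isLeftDescent_of_not_cons hM)
      rw [hM', ← mul_assoc, hsq, zero_mul]
    · rw [ih hred, mul_zero]

end NilCoxeter

section DividedDifference

variable {A F : Type*} [CommRing A] [FunLike F A A]

def IsDividedDifference (s : F) (α : A) (D : A → A) : Prop := ∀ g, α * D g = g - s g

namespace IsDividedDifference

variable {s t : F} {α β : A} {D D₁ D₂ : A → A}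

lemma apply_eq_zero (hD : IsDividedDifference s α D) (hα : IsRegular α) {g : A} (hg : s g = g) :
    D g = 0 :=
  hα.1 (by change α * D g = α * 0; rw [hD g, hg, sub_self, mul_zero])

variable [RingHomClass F A A]

lemma map_apply (hD : IsDividedDifference s α D) (hs : ∀ x, s (s x) = x) (hsα : s α = -α)
    (hα : IsRegular α) (g : A) : s (D g) = D g := by
  apply hα.1
  have h := congrArg s (hD g)
  rw [map_mul, map_sub, hs, hsα] at h
  change α * s (D g) = α * D g
  linear_combination -h - hD g

lemma apply_mul (hD : IsDividedDifference s α D) (hα : IsRegular α) {y q : A} (hy : y - s y = α)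
    (hq : s q = q) : D (y * q) = q :=
  hα.1 (by change α * D (y * q) = α * q; rw [hD, map_mul, hq, ← hy]; ring)

lemma mul_mul_apply_apply (hD₁ : IsDividedDifference s α D₁) (hD₂ : IsDividedDifference t β D₂)
    (hsβ : s β = β) (g : A) : α * β * D₁ (D₂ g) = g - s g - t g + s (t g) := by
  have h := congrArg s (hD₂ g)
  rw [map_mul, map_sub, hsβ] at h
  linear_combination β * hD₁ (D₂ g) + hD₂ g - h

lemma comm (hD₁ : IsDividedDifference s α D₁) (hD₂ : IsDividedDifference t β D₂)
    (hsβ : s β = β) (htα : t α = α) (hst : ∀ x, s (t x) = t (s x)) (hα : IsRegular α)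
    (hβ : IsRegular β) (g : A) : D₁ (D₂ g) = D₂ (D₁ g) := by
  apply (hα.mul hβ).1
  change α * β * D₁ (D₂ g) = α * β * D₂ (D₁ g)
  rw [mul_mul_apply_apply hD₁ hD₂ hsβ, mul_comm α, mul_mul_apply_apply hD₂ hD₁ htα, hst]
  ring

lemma mul_mul_mul_apply_apply_apply (hD₁ : IsDividedDifference s α D₁)
    (hD₂ : IsDividedDifference t β D₂) (hs : ∀ x, s (s x) = x) (hsα : s α = -α)
    (hsβ : s β = α + β) (htα : t α = α + β) (hα : IsRegular α) (g : A) :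
    α * β * (α + β) * D₁ (D₂ (D₁ g)) =
      g - s g - t g + t (s g) + s (t g) - s (t (s g)) := by
  have hinv := hD₁.map_apply hs hsα hα g
  have e₂ := congrArg s (hD₂ (D₁ g))
  rw [map_mul, map_sub, hsβ, hinv] at e₂
  have e₁ := congrArg t (hD₁ g)
  rw [map_mul, map_sub, htα] at e₁
  have e₁' := congrArg s e₁
  rw [map_mul, map_sub, map_add, hsα, hsβ, neg_add_cancel_left] at e₁'
  linear_combination β * (α + β) * hD₁ (D₂ (D₁ g)) + (α + β) * hD₂ (D₁ g) - β * e₂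
    + hD₁ g - e₁ + e₁'

lemma braid (hD₁ : IsDividedDifference s α D₁) (hD₂ : IsDividedDifference t β D₂)
    (hs : ∀ x, s (s x) = x) (ht : ∀ x, t (t x) = x) (hsα : s α = -α) (htβ : t β = -β)
    (hsβ : s β = α + β) (htα : t α = α + β) (hsts : ∀ x, s (t (s x)) = t (s (t x)))
    (hα : IsRegular α) (hβ : IsRegular β) (hαβ : IsRegular (α + β)) (g : A) :
    D₁ (D₂ (D₁ g)) = D₂ (D₁ (D₂ g)) := by
  apply ((hα.mul hβ).mul hαβ).1
  change α * β * (α + β) * D₁ (D₂ (D₁ g)) = α * β * (α + β) * D₂ (D₁ (D₂ g))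
  have h₂₁₂ := hD₂.mul_mul_mul_apply_apply_apply hD₁ ht htβ (by rw [htα, add_comm])
    (by rw [hsβ, add_comm]) hβ g
  rw [hD₁.mul_mul_mul_apply_apply_apply hD₂ hs hsα hsβ htα hα, mul_comm α β, add_comm α β,
    h₂₁₂, hsts]
  ring

end IsDividedDifference

end DividedDifference

namespace MvPolynomial

variable {σ R : Type*} [CommRing R]

lemma isRegular_X_sub_X {a b : σ} (hab : a ≠ b) : IsRegular (X a - X b : MvPolynomial σ R) := by
  classical
  let φ : MvPolynomial σ R →ₐ[R] MvPolynomial σ R :=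
    aeval fun j => if j = b then X b + X a else X j
  let ψ : MvPolynomial σ R →ₐ[R] MvPolynomial σ R :=
    aeval fun j => if j = b then X b - X a else X j
  have hψφ : ∀ p, ψ (φ p) = p := by
    have h : ψ.comp φ = AlgHom.id R _ :=
      algHom_ext fun j => by by_cases hj : j = b <;> simp [φ, ψ, hj, hab]
    exact fun p => by rw [← AlgHom.comp_apply, h, AlgHom.id_apply]
  have hφ : φ (X a - X b) = -X b := by
    simp [φ, hab]
  refine (Commute.isRegular_iff fun _ => Commute.all _ _).2 fun u v huv => ?_
  have h : X b * φ u = X b * φ v := by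
    simpa [hφ] using congrArg φ huv
  rw [← hψφ u, ← hψφ v, isRegular_X.1 h]

lemma rename_swap_rename_swap [DecidableEq σ] (a b : σ) (p : MvPolynomial σ R) :
    rename (Equiv.swap a b) (rename (Equiv.swap a b) p) = p := by
  rw [rename_rename, ← Equiv.Perm.coe_mul, Equiv.swap_mul_self, Equiv.Perm.coe_one, rename_id_apply]

end MvPolynomial

section Demazure

open Equiv.Perm

variable {R : Type*} [CommRing R] {n : ℕ}

def IsDemazure (D : Fin n → Module.End R (MvPolynomial (Fin (n + 1)) R)) : Prop :=
  ∀ c, IsDividedDifference (rename (simpleSwap c)) (X c.castSucc - X c.succ) (D c)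

variable {D : Fin n → Module.End R (MvPolynomial (Fin (n + 1)) R)}

lemma isRegular_X_castSucc_sub_X_succ (c : Fin n) :
    IsRegular (X c.castSucc - X c.succ : MvPolynomial (Fin (n + 1)) R) :=
  isRegular_X_sub_X Fin.castSucc_lt_succ.ne

lemma rename_simpleSwap_X_castSucc_sub_X_succ (c : Fin n) :
    rename (simpleSwap c) (X c.castSucc - X c.succ : MvPolynomial (Fin (n + 1)) R) =
      -(X c.castSucc - X c.succ) := by
  simp

lemma rename_simpleSwap_X_castSucc_sub_X_succ_of_far {c d : Fin n}
    (hfar : (c : ℕ) + 1 < d ∨ (d : ℕ) + 1 < c) :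
    rename (simpleSwap c) (X d.castSucc - X d.succ : MvPolynomial (Fin (n + 1)) R) =
      X d.castSucc - X d.succ := by
  rw [map_sub, rename_X, rename_X, simpleSwap_apply_of_ne (by simp; omega),
    simpleSwap_apply_of_ne (by simp; omega)]

lemma IsDemazure.rename_apply (hD : IsDemazure D) (c : Fin n) (g : MvPolynomial (Fin (n + 1)) R) :
    rename (simpleSwap c) (D c g) = D c g :=
  (hD c).map_apply (rename_swap_rename_swap _ _) (rename_simpleSwap_X_castSucc_sub_X_succ c)
    (isRegular_X_castSucc_sub_X_succ c) g

lemma IsDemazure.mul_self (hD : IsDemazure D) (c : Fin n) : D c * D c = 0 :=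
  LinearMap.ext fun g =>
    (hD c).apply_eq_zero (isRegular_X_castSucc_sub_X_succ c) (hD.rename_apply c g)

lemma IsDemazure.mul_comm_of_far (hD : IsDemazure D) {c d : Fin n} (hfar : (c : ℕ) + 1 < d) :
    D c * D d = D d * D c := by
  refine LinearMap.ext fun g => (hD c).comm (hD d) (rename_simpleSwap_X_castSucc_sub_X_succ_of_far
    (.inl hfar)) (rename_simpleSwap_X_castSucc_sub_X_succ_of_far (.inr hfar))
    (fun x => ?_) (isRegular_X_castSucc_sub_X_succ c) (isRegular_X_castSucc_sub_X_succ d) g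
  rw [rename_rename, rename_rename, ← coe_mul, ← coe_mul, simpleSwap_mul_comm_of_far (.inl hfar)]

lemma IsDemazure.braid (hD : IsDemazure D) {c d : Fin n} (hadj : (c : ℕ) + 1 = d) :
    D c * D d * D c = D d * D c * D d := by
  have hcd : d.castSucc = c.succ := Fin.ext (by simp [← hadj])
  have hxz : c.castSucc ≠ d.succ := by simp [Fin.ext_iff]; omega
  have hyz : c.succ ≠ d.succ := by simp [Fin.ext_iff]; omega
  have hsts : ∀ x : MvPolynomial (Fin (n + 1)) R,
      rename (simpleSwap c) (rename (simpleSwap d) (rename (simpleSwap c) x)) =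
        rename (simpleSwap d) (rename (simpleSwap c) (rename (simpleSwap d) x)) := fun x => by
    simp only [rename_rename, ← coe_mul, ← mul_assoc, simpleSwap_braid hadj]
  have hD₂ := hD d
  rw [hcd] at hD₂
  have hdc₁ : simpleSwap d c.castSucc = c.castSucc := simpleSwap_apply_of_ne (by simp; omega)
  have hdc₂ : simpleSwap d c.succ = d.succ := by rw [← hcd]; exact Equiv.swap_apply_left _ _
  have hcd₂ : simpleSwap c d.succ = d.succ := simpleSwap_apply_of_ne (by simp; omega)
  have htβ := rename_simpleSwap_X_castSucc_sub_X_succ (R := R) d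
  rw [hcd] at htβ
  refine LinearMap.ext fun g => (hD c).braid hD₂ (rename_swap_rename_swap _ _)
    (rename_swap_rename_swap _ _) (rename_simpleSwap_X_castSucc_sub_X_succ c) htβ
    (by simp [hcd₂]) (by simp [hdc₁, hdc₂]) hsts (isRegular_X_castSucc_sub_X_succ c)
    (isRegular_X_sub_X hyz) (by rw [sub_add_sub_cancel]; exact isRegular_X_sub_X hxz) g

end Demazure

lemma LinearMap.foldr_comp_eq_prod_map {R M ι : Type*} [Semiring R] [AddCommMonoid M] [Module R M]
    (f : ι → Module.End R M) (L : List ι) :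
    L.foldr (fun c acc => (f c).comp acc) LinearMap.id = (L.map f).prod := by
  induction L with
  | nil => rfl
  | cons c L ih => rw [List.foldr_cons, ih, List.map_cons, List.prod_cons, Module.End.mul_eq_comp]

open Equiv.Perm

theorem demazure_longest_word_kills_symmetric_general
    {R : Type*} [CommRing R] {N : ℕ}
    (D : Fin (N + 1) →
      MvPolynomial (Fin (N + 2)) R →ₗ[R] MvPolynomial (Fin (N + 2)) R)
    (hD : ∀ (c : Fin (N + 1)) (g : MvPolynomial (Fin (N + 2)) R),
      (X c.castSucc - X c.succ) * D c g
        = g - rename (Equiv.swap c.castSucc c.succ) g)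
    (L : List (Fin (N + 1)))
    (hlen : L.length = (N + 2) * (N + 1) / 2)
    (Dw : MvPolynomial (Fin (N + 2)) R →ₗ[R] MvPolynomial (Fin (N + 2)) R)
    (hDw : Dw = L.foldr (fun c acc => (D c).comp acc) LinearMap.id)
    (i : Fin (N + 1))
    (f : MvPolynomial (Fin (N + 2)) R)
    (hf : rename (Equiv.swap i.castSucc i.succ) f = f) :
    ∀ g : MvPolynomial (Fin (N + 2)) R, Dw (f * Dw g) = 0 := by
  intro g
  have hDem : IsDemazure D := hD
  rw [LinearMap.foldr_comp_eq_prod_map] at hDw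
  subst hDw
  have hℓ : (N + 2).choose 2 = L.length := by rw [hlen, Nat.choose_two_right]; rfl
  have hvanish : ∀ M : List (Fin (N + 1)), L.length < M.length → (M.map D).prod = 0 :=
    fun M hM => prod_map_eq_zero_of_not_isReducedWord hDem.mul_self
      (fun _ _ => hDem.mul_comm_of_far) (fun _ _ => hDem.braid) M
      (not_isReducedWord_of_choose_two_lt (hℓ ▸ hM))
  have hinv : rename (simpleSwap i) ((L.map D).prod g) = (L.map D).prod g := by
    have h₀ : D i ((L.map D).prod g) = 0 := by
      simpa using LinearMap.congr_fun (hvanish (i :: L) (by simp)) g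
    have h := hDem i ((L.map D).prod g)
    rw [h₀, mul_zero] at h
    exact (sub_eq_zero.mp h.symm).symm
  have hfg : rename (simpleSwap i) (f * (L.map D).prod g) = f * (L.map D).prod g := by
    rw [map_mul, hinv]; exact congrArg (· * _) hf
  calc (L.map D).prod (f * (L.map D).prod g)
      = (L.map D).prod (D i (X i.castSucc * (f * (L.map D).prod g))) := by
        rw [(hDem i).apply_mul (isRegular_X_castSucc_sub_X_succ i) (by simp) hfg]
    _ = ((L ++ [i]).map D).prod (X i.castSucc * (f * (L.map D).prod g)) := by
        simp [List.prod_append]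
    _ = 0 := by rw [hvanish _ (by simp), LinearMap.zero_apply]

theorem demazure_longest_word_kills_symmetric
    {R : Type*} [CommRing R] {N : ℕ}
    (D : Fin (N + 1) →
      MvPolynomial (Fin (N + 2)) R →ₗ[R] MvPolynomial (Fin (N + 2)) R)
    (hD : ∀ (c : Fin (N + 1)) (g : MvPolynomial (Fin (N + 2)) R),
      (X c.castSucc - X c.succ) * D c g
        = g - rename (Equiv.swap c.castSucc c.succ) g)
    (L : List (Fin (N + 1)))
    (hlen : L.length = (N + 2) * (N + 1) / 2)
    (hprod : (L.map fun c => Equiv.swap c.castSucc c.succ).prod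
        = (Fin.revPerm : Equiv.Perm (Fin (N + 2))))
    (Dw : MvPolynomial (Fin (N + 2)) R →ₗ[R] MvPolynomial (Fin (N + 2)) R)
    (hDw : Dw = L.foldr (fun c acc => (D c).comp acc) LinearMap.id)
    (i : Fin (N + 1))
    (f : MvPolynomial (Fin (N + 2)) R)
    (hf : rename (Equiv.swap i.castSucc i.succ) f = f) :
    ∀ g : MvPolynomial (Fin (N + 2)) R, Dw (f * Dw g) = 0 :=
  demazure_longest_word_kills_symmetric_general D hD L hlen Dw hDw i f hf
end
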